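/- arXiv:1306.1724 — 5 statements merged into one kernel-verified Lean document; each statement's English description precedes it below -/
import Mathlib

section
/- Let (Ω, F, μ) be a complete probability space with filtration (F_n) generating F, let v, ω₁, ω₂ be weights (positive integrable random variables), 1 < p₁, p₂ < ∞, 1/p = 1/p₁ + 1/p₂. If there exists C > 0 such that for every stopping time τ and all f ∈ L^{p₁}(ω₁), g ∈ L^{p₂}(ω₂), (∫_{{τ<∞}} |f_τ g_τ|^p v dμ)^{1/p} ≤ C ‖f‖_{L^{p₁}(ω₁)} ‖g‖_{L^{p₂}(ω₂)}, then the bilinear maximal operator M(f,g) = sup_n |E_n f| |E_n g| satisfies the weak-type bound ‖M(f,g)‖_{L^{p,∞}(v)} ≤ C ‖f‖_{L^{p₁}(ω₁)} ‖g‖_{L^{p₂}(ω₂)}. -/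
open MeasureTheory Filter ENNReal Topology

noncomputable section

theorem stmt_0
    {Ω : Type*} {m0 : MeasurableSpace Ω} {μ : Measure Ω} [IsProbabilityMeasure μ]
    (ℱ : Filtration ℕ m0) (hgen : m0 = ⨆ n, ℱ n)
    (v ω₁ ω₂ : Ω → ℝ)
    (hv : ∀ x, 0 < v x) (hω₁ : ∀ x, 0 < ω₁ x) (hω₂ : ∀ x, 0 < ω₂ x)
    (hvI : Integrable v μ) (hω₁I : Integrable ω₁ μ) (hω₂I : Integrable ω₂ μ)
    (p p₁ p₂ C : ℝ) (hp₁ : 1 < p₁) (hp₂ : 1 < p₂)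
    (hp : 1 / p = 1 / p₁ + 1 / p₂) (hC : 0 < C)
    (H : ∀ τ : Ω → ℕ∞, (∀ n : ℕ, MeasurableSet[ℱ n] {x | τ x ≤ (n : ℕ∞)}) →
      ∀ f g : Ω → ℝ, Integrable f μ →
        Integrable (fun x => |f x| ^ p₁ * ω₁ x) μ →
        Integrable g μ →
        Integrable (fun x => |g x| ^ p₂ * ω₂ x) μ →
        (∫ x in {x | τ x ≠ ⊤},
            |(μ[f|ℱ (τ x).toNat]) x * (μ[g|ℱ (τ x).toNat]) x| ^ p * v x ∂μ) ^ (1 / p)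
          ≤ C * (∫ x, |f x| ^ p₁ * ω₁ x ∂μ) ^ (1 / p₁)
              * (∫ x, |g x| ^ p₂ * ω₂ x ∂μ) ^ (1 / p₂)) :
    ∀ f g : Ω → ℝ, Integrable f μ →
      Integrable (fun x => |f x| ^ p₁ * ω₁ x) μ →
      Integrable g μ →
      Integrable (fun x => |g x| ^ p₂ * ω₂ x) μ →
      ∀ lam : ℝ, 0 < lam →
        lam * (∫ x in {x | ENNReal.ofReal lam <
            ⨆ n, ENNReal.ofReal (|(μ[f|ℱ n]) x| * |(μ[g|ℱ n]) x|)}, v x ∂μ) ^ (1 / p)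
          ≤ C * (∫ x, |f x| ^ p₁ * ω₁ x ∂μ) ^ (1 / p₁)
              * (∫ x, |g x| ^ p₂ * ω₂ x ∂μ) ^ (1 / p₂) := by
  classical
  intro f g hf hf1 hg hg1 lam hlam
  have h1p : 0 < 1 / p := by rw [hp]; positivity
  have hp0 : 0 < p := one_div_pos.mp h1p
  set a : ℕ → Ω → ℝ := fun n x => |(μ[f|ℱ n]) x| * |(μ[g|ℱ n]) x| with ha
  have hameasF : ∀ n, Measurable[ℱ n] (a n) := by
    intro n
    letI : MeasurableSpace Ω := ℱ n
    have h1 : Measurable[ℱ n] (μ[f|ℱ n]) := stronglyMeasurable_condExp.measurable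
    have h2 : Measurable[ℱ n] (μ[g|ℱ n]) := stronglyMeasurable_condExp.measurable
    exact h1.abs.mul h2.abs
  have hameas : ∀ n, Measurable (a n) := fun n => (hameasF n).mono (ℱ.le n) le_rfl
  set P : ℕ → ℕ → Ω → Prop := fun K n x => lam < a n x ∧ a n x ≤ (K : ℝ) with hPdef
  have hPmeasF : ∀ K n, MeasurableSet[ℱ n] {x | P K n x} := by
    intro K n
    letI : MeasurableSpace Ω := ℱ n
    exact (measurableSet_lt measurable_const (hameasF n)).inter
      (measurableSet_le (hameasF n) measurable_const)
  have hPmeas : ∀ K n, MeasurableSet {x | P K n x} := fun K n =>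
    (ℱ.le n) _ (hPmeasF K n)
  set S : ℕ → Set Ω := fun K => {x | ∃ n, P K n x} with hSdef
  have hSmeas : ∀ K, MeasurableSet (S K) := by
    intro K
    have : S K = ⋃ n, {x | P K n x} := by
      ext x; simp [hSdef, Set.mem_iUnion]
    rw [this]
    exact MeasurableSet.iUnion fun n => hPmeas K n
  set τ : ℕ → Ω → ℕ∞ :=
    fun K x => if h : ∃ n, P K n x then ((Nat.find h : ℕ) : ℕ∞) else ⊤ with hτdef
  -- stopping time property
  have hstop : ∀ K (n : ℕ), MeasurableSet[ℱ n] {x | τ K x ≤ (n : ℕ∞)} := by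
    intro K n
    have hset : {x | τ K x ≤ (n : ℕ∞)} = ⋃ k, ⋃ _ : k ≤ n, {x | P K k x} := by
      ext x
      simp only [Set.mem_setOf_eq, Set.mem_iUnion]
      constructor
      · intro hx
        by_cases h : ∃ m, P K m x
        · simp only [hτdef, dif_pos h] at hx
          have hfind : Nat.find h ≤ n := by exact_mod_cast hx
          exact ⟨Nat.find h, hfind, Nat.find_spec h⟩
        · simp only [hτdef, dif_neg h] at hx
          exact absurd (top_le_iff.mp hx).symm (by simp)
      · rintro ⟨k, hk, hPk⟩
        have h : ∃ m, P K m x := ⟨k, hPk⟩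
        simp only [hτdef, dif_pos h]
        exact_mod_cast le_trans (Nat.find_min' h hPk) hk
    rw [hset]
    exact MeasurableSet.iUnion fun k => MeasurableSet.iUnion fun hk =>
      ℱ.mono hk _ (hPmeasF K k)
  have hne : ∀ K, {x | τ K x ≠ ⊤} = S K := by
    intro K; ext x
    simp only [Set.mem_setOf_eq, hSdef]
    constructor
    · intro hx
      by_cases h : ∃ m, P K m x
      · exact h
      · simp [hτdef, dif_neg h] at hx
    · intro h
      simp [hτdef, dif_pos h]
  -- value of toNat on S K
  have htoNat : ∀ K x (h : ∃ n, P K n x), (τ K x).toNat = Nat.find h := by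
    intro K x h
    simp [hτdef, dif_pos h]
  -- the union of the S K is the level set
  have hSetEq : {x | ENNReal.ofReal lam <
      ⨆ n, ENNReal.ofReal (|(μ[f|ℱ n]) x| * |(μ[g|ℱ n]) x|)} = ⋃ K, S K := by
    ext x
    simp only [Set.mem_setOf_eq, lt_iSup_iff, Set.mem_iUnion, hSdef, hPdef]
    constructor
    · rintro ⟨n, hn⟩
      have hlt : lam < a n x :=
        (ENNReal.ofReal_lt_ofReal_iff_of_nonneg hlam.le).mp hn
      exact ⟨⌈a n x⌉₊, n, hlt, Nat.le_ceil _⟩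
    · rintro ⟨K, n, hn, -⟩
      exact ⟨n, (ENNReal.ofReal_lt_ofReal_iff_of_nonneg hlam.le).mpr hn⟩
  have hSmono : Monotone S := by
    intro K K' hKK' x hx
    obtain ⟨n, h1, h2⟩ := hx
    exact ⟨n, h1, h2.trans (by exact_mod_cast hKK')⟩
  -- per-K estimate
  have key : ∀ K : ℕ,
      lam * (∫ x in S K, v x ∂μ) ^ (1 / p)
        ≤ C * (∫ x, |f x| ^ p₁ * ω₁ x ∂μ) ^ (1 / p₁)
            * (∫ x, |g x| ^ p₂ * ω₂ x ∂μ) ^ (1 / p₂) := by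
    intro K
    have hHK := H (τ K) (hstop K) f g hf hf1 hg hg1
    rw [hne K] at hHK
    set hfun : Ω → ℝ := fun x =>
      |(μ[f|ℱ (τ K x).toNat]) x * (μ[g|ℱ (τ K x).toNat]) x| ^ p * v x with hfundef
    -- pointwise facts on S K
    have habs : ∀ x (h : ∃ n, P K n x),
        |(μ[f|ℱ (τ K x).toNat]) x * (μ[g|ℱ (τ K x).toNat]) x| = a ((τ K x).toNat) x := by
      intro x h
      rw [abs_mul]
    have hlow : ∀ x ∈ S K, lam ≤ |(μ[f|ℱ (τ K x).toNat]) x * (μ[g|ℱ (τ K x).toNat]) x| := by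
      intro x hx
      have h : ∃ n, P K n x := hx
      rw [habs x h, htoNat K x h]
      exact (Nat.find_spec h).1.le
    have hup : ∀ x ∈ S K,
        |(μ[f|ℱ (τ K x).toNat]) x * (μ[g|ℱ (τ K x).toNat]) x| ≤ (K : ℝ) := by
      intro x hx
      have h : ∃ n, P K n x := hx
      rw [habs x h, htoNat K x h]
      exact (Nat.find_spec h).2
    -- measurability of hfun
    have hfunmeas : AEStronglyMeasurable hfun μ := by
      set G : ℕ → Ω → ℝ := fun n x => |(μ[f|ℱ n]) x * (μ[g|ℱ n]) x| ^ p with hGdef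
      have hGmeas : ∀ n, Measurable (G n) := by
        intro n
        exact (Real.continuous_rpow_const hp0.le).measurable.comp
          ((stronglyMeasurable_condExp.mono (ℱ.le n)).measurable.mul
            (stronglyMeasurable_condExp.mono (ℱ.le n)).measurable).abs
      set P' : ℕ → Ω → Prop := fun n x => P K n x ∨ x ∉ S K with hP'def
      have hP'meas : ∀ n, MeasurableSet {x | P' n x} := fun n =>
        (hPmeas K n).union (hSmeas K).compl
      have htot : ∀ x, ∃ n, P' n x := by
        intro x
        by_cases hx : x ∈ S K
        · obtain ⟨n, hn⟩ := hx
          exact ⟨n, Or.inl hn⟩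
        · exact ⟨0, Or.inr hx⟩
      have hMeq : (fun x => G ((τ K x).toNat) x) = fun x => G (Nat.find (htot x)) x := by
        funext x
        by_cases hx : ∃ n, P K n x
        · have h1 : Nat.find (htot x) = Nat.find hx := by
            apply le_antisymm
            · exact Nat.find_min' _ (Or.inl (Nat.find_spec hx))
            · rcases Nat.find_spec (htot x) with h | h
              · exact Nat.find_min' _ h
              · exact absurd hx h
          rw [htoNat K x hx, h1]
        · have h0 : Nat.find (htot x) = 0 := by
            have : ∀ m, m < Nat.find (htot x) → ¬ P' m x := fun m hm => Nat.find_min _ hm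
            by_contra hne0
            have h1 : 0 < Nat.find (htot x) := Nat.pos_of_ne_zero hne0
            exact (this 0 h1) (Or.inr hx)
          have hτtop : τ K x = ⊤ := by simp [hτdef, dif_neg hx]
          rw [h0, hτtop]
          rfl
      have hGm : Measurable fun x => G ((τ K x).toNat) x := by
        rw [hMeq]
        exact Measurable.find hGmeas hP'meas htot
      exact (hGm.aestronglyMeasurable.mul hvI.aestronglyMeasurable)
    -- integrability of hfun on S K
    have hint : IntegrableOn hfun (S K) μ := by
      refine Integrable.mono ((hvI.const_mul ((K : ℝ) ^ p)).integrableOn)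
        hfunmeas.restrict ?_
      refine (ae_restrict_iff' (hSmeas K)).2 (ae_of_all _ ?_)
      intro x hx
      have h1 : 0 ≤ hfun x :=
        mul_nonneg (Real.rpow_nonneg (abs_nonneg _) p) (hv x).le
      have h2 : hfun x ≤ (K : ℝ) ^ p * v x :=
        mul_le_mul_of_nonneg_right
          (Real.rpow_le_rpow (abs_nonneg _) (hup x hx) hp0.le) (hv x).le
      rw [Real.norm_of_nonneg h1, Real.norm_of_nonneg
        (mul_nonneg (Real.rpow_nonneg (Nat.cast_nonneg K) p) (hv x).le)]
      exact h2
    -- the comparison of integrals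
    have hmono : ∫ x in S K, lam ^ p * v x ∂μ ≤ ∫ x in S K, hfun x ∂μ := by
      refine setIntegral_mono_on ((hvI.const_mul (lam ^ p)).integrableOn) hint (hSmeas K) ?_
      intro x hx
      exact mul_le_mul_of_nonneg_right
        (Real.rpow_le_rpow hlam.le (hlow x hx) hp0.le) (hv x).le
    have hIv : 0 ≤ ∫ x in S K, v x ∂μ := integral_nonneg fun x => (hv x).le
    have hconst : ∫ x in S K, lam ^ p * v x ∂μ = lam ^ p * ∫ x in S K, v x ∂μ :=
      integral_const_mul _ _
    have heq : lam * (∫ x in S K, v x ∂μ) ^ (1 / p)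
        = (lam ^ p * ∫ x in S K, v x ∂μ) ^ (1 / p) := by
      rw [Real.mul_rpow (Real.rpow_nonneg hlam.le p) hIv,
        ← Real.rpow_mul hlam.le, mul_one_div_cancel hp0.ne', Real.rpow_one]
    calc lam * (∫ x in S K, v x ∂μ) ^ (1 / p)
        = (∫ x in S K, lam ^ p * v x ∂μ) ^ (1 / p) := by rw [heq, hconst]
      _ ≤ (∫ x in S K, hfun x ∂μ) ^ (1 / p) := by
          refine Real.rpow_le_rpow ?_ hmono h1p.le
          rw [hconst]
          exact mul_nonneg (Real.rpow_nonneg hlam.le p) hIv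
      _ ≤ _ := hHK
  -- pass to the limit K → ∞
  have hTend : Tendsto (fun K => ∫ x in S K, v x ∂μ) atTop
      (𝓝 (∫ x in ⋃ K, S K, v x ∂μ)) :=
    tendsto_setIntegral_of_monotone (fun K => hSmeas K) hSmono hvI.integrableOn
  rw [hSetEq]
  exact le_of_tendsto
    (((Real.continuousAt_rpow_const _ _ (Or.inr h1p.le)).tendsto.comp hTend).const_mul lam)
    (Eventually.of_forall key)

end
end

section
/- Let (Ω, F, μ) be a probability space with filtration (F_n), weights v, ω₁, ω₂, and 1 < p₁, p₂ < ∞ with 1/p = 1/p₁ + 1/p₂. If the weak-type inequality ‖M(f,g)‖_{L^{p,∞}(v)} ≤ C ‖f‖_{L^{p₁}(ω₁)} ‖g‖_{L^{p₂}(ω₂)} holds for all f ∈ L^{p₁}(ω₁), g ∈ L^{p₂}(ω₂), then for every stopping time τ, (∫_{{τ<∞}} |f_τ g_τ|^p v dμ)^{1/p} ≤ C' ‖f‖_{L^{p₁}(ω₁)} ‖g‖_{L^{p₂}(ω₂)} for some constant C' depending only on C and p. -/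
/-!
Cut `{τ < ∞}` into the dyadic level sets `E_k = {2^k < |f_τ g_τ| ≤ 2^(k+1)}`. Each `E_k` is
`ℱ_τ`-measurable: `E_k ∩ {τ = n} ∈ ℱ n`. Hence at time `n = τ` the martingales of `f 1_{E_k}` and
`g 1_{E_k}` agree with those of `f` and `g` on `E_k`, so `E_k ⊆ {M(f 1_{E_k}, g 1_{E_k}) > 2^k}`
and the weak-type bound gives `2^{kp} v(E_k) ≤ C^p ‖f 1_{E_k}‖^p ‖g 1_{E_k}‖^p`. Summing over `k`
with Hölder's inequality for series (exponents `p₁/p` and `p₂/p`) and the disjointness of the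
`E_k` gives the strong bound with `C' = 2C`.
-/

open MeasureTheory Filter ENNReal

noncomputable section

lemma ENNReal.tsum_rpow_mul_rpow_le {ι : Type*} (a b : ι → ℝ≥0∞) {r s : ℝ} (hr : 0 ≤ r)
    (hs : 0 ≤ s) (hrs : r + s = 1) :
    ∑' i, a i ^ r * b i ^ s ≤ (∑' i, a i) ^ r * (∑' i, b i) ^ s := by
  let _ : MeasurableSpace ι := ⊤
  have : MeasurableSingletonClass ι := ⟨fun _ => trivial⟩
  simpa only [lintegral_count] using
    lintegral_mul_norm_pow_le (μ := (Measure.count : Measure ι)) (f := a) (g := b)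
      measurable_from_top.aemeasurable measurable_from_top.aemeasurable hr hs hrs

lemma ofReal_rpow_mul_ofReal_le_of_mul_rpow_le {p lam X Y : ℝ} (hp : 0 < p) (hlam : 0 ≤ lam)
    (hX : 0 ≤ X) (h : lam * X ^ (1 / p) ≤ Y) :
    ENNReal.ofReal lam ^ p * ENNReal.ofReal X ≤ ENNReal.ofReal Y ^ p := by
  have hlhs : 0 ≤ lam * X ^ (1 / p) := mul_nonneg hlam (Real.rpow_nonneg hX _)
  calc ENNReal.ofReal lam ^ p * ENNReal.ofReal X = ENNReal.ofReal ((lam * X ^ (1 / p)) ^ p) := by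
        rw [Real.mul_rpow hlam (Real.rpow_nonneg hX _), ← Real.rpow_mul hX,
          one_div_mul_cancel hp.ne', Real.rpow_one, ENNReal.ofReal_mul (Real.rpow_nonneg hlam _),
          ENNReal.ofReal_rpow_of_nonneg hlam hp.le]
    _ ≤ ENNReal.ofReal (Y ^ p) := ENNReal.ofReal_le_ofReal (Real.rpow_le_rpow hlhs h hp.le)
    _ = ENNReal.ofReal Y ^ p := (ENNReal.ofReal_rpow_of_nonneg (hlhs.trans h) hp.le).symm

lemma ofReal_mul_rpow_mul_rpow_rpow {p p₁ p₂ C A B : ℝ} (hp : 0 ≤ p) (hp₁ : 0 ≤ p₁)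
    (hp₂ : 0 ≤ p₂) (hC : 0 ≤ C) (hA : 0 ≤ A) (hB : 0 ≤ B) :
    ENNReal.ofReal (C * A ^ (1 / p₁) * B ^ (1 / p₂)) ^ p =
      ENNReal.ofReal C ^ p * ENNReal.ofReal A ^ (p / p₁) * ENNReal.ofReal B ^ (p / p₂) := by
  rw [ENNReal.ofReal_mul (mul_nonneg hC (Real.rpow_nonneg hA _)), ENNReal.ofReal_mul hC,
    ← ENNReal.ofReal_rpow_of_nonneg hA (by positivity),
    ← ENNReal.ofReal_rpow_of_nonneg hB (by positivity),
    ENNReal.mul_rpow_of_nonneg _ _ hp, ENNReal.mul_rpow_of_nonneg _ _ hp, ← ENNReal.rpow_mul,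
    ← ENNReal.rpow_mul, one_div_mul_eq_div, one_div_mul_eq_div]

lemma abs_indicator_rpow_mul {Ω : Type*} {q : ℝ} (hq : q ≠ 0) (E : Set Ω) (f w : Ω → ℝ) :
    (fun x => |E.indicator f x| ^ q * w x) = E.indicator fun x => |f x| ^ q * w x := by
  ext x
  by_cases hx : x ∈ E <;> simp [hx, Real.zero_rpow hq]

lemma withDensity_ofReal_apply {Ω : Type*} [MeasurableSpace Ω] {μ : Measure Ω} {F : Ω → ℝ}
    (hF : Integrable F μ) (hF0 : 0 ≤ F) {s : Set Ω} (hs : MeasurableSet s) :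
    μ.withDensity (fun x => ENNReal.ofReal (F x)) s = ENNReal.ofReal (∫ x in s, F x ∂μ) := by
  rw [withDensity_apply _ hs,
    ofReal_integral_eq_lintegral_ofReal hF.integrableOn (ae_of_all _ hF0)]

lemma setLIntegral_withDensity_ofReal_rpow {Ω : Type*} [MeasurableSpace Ω] {μ : Measure Ω}
    {G v : Ω → ℝ} (hG : Measurable G) (hG0 : 0 ≤ G) (hv : AEMeasurable v μ) {p : ℝ} (hp : 0 ≤ p)
    {S : Set Ω} (hS : MeasurableSet S) :
    ∫⁻ x in S, ENNReal.ofReal (G x) ^ p ∂μ.withDensity (fun x => ENNReal.ofReal (v x)) =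
      ∫⁻ x in S, ENNReal.ofReal (G x ^ p * v x) ∂μ := by
  rw [setLIntegral_withDensity_eq_lintegral_mul₀ hv.ennreal_ofReal
    (hG.ennreal_ofReal.pow_const p).aemeasurable hS]
  refine lintegral_congr fun x => ?_
  rw [Pi.mul_apply, ENNReal.ofReal_mul (Real.rpow_nonneg (hG0 x) _),
    ENNReal.ofReal_rpow_of_nonneg (hG0 x) hp, mul_comm]

lemma integral_rpow_one_div_le_of_lintegral_le {Ω : Type*} [MeasurableSpace Ω] {μ : Measure Ω}
    {F : Ω → ℝ} (hF0 : 0 ≤ᵐ[μ] F) (hFm : AEStronglyMeasurable F μ) {p Y : ℝ} (hp : 0 < p)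
    (hY : 0 ≤ Y) (h : ∫⁻ x, ENNReal.ofReal (F x) ∂μ ≤ ENNReal.ofReal Y ^ p) :
    (∫ x, F x ∂μ) ^ (1 / p) ≤ Y := by
  have hint : ∫ x, F x ∂μ ≤ Y ^ p := by
    rw [integral_eq_lintegral_of_nonneg_ae hF0 hFm]
    rw [ENNReal.ofReal_rpow_of_nonneg hY hp.le] at h
    exact ENNReal.toReal_le_of_le_ofReal (by positivity) h
  calc (∫ x, F x ∂μ) ^ (1 / p) ≤ (Y ^ p) ^ (1 / p) :=
        Real.rpow_le_rpow (integral_nonneg_of_ae hF0) hint (by positivity)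
    _ = Y := by rw [← Real.rpow_mul hY, mul_one_div_cancel hp.ne', Real.rpow_one]

section DyadicDecomposition

variable {Ω : Type*}

def dyadicLevelSet (S : Set Ω) (G : Ω → ℝ) (k : ℤ) : Set Ω :=
  S ∩ G ⁻¹' Set.Ioc (2 ^ k) (2 ^ (k + 1))

lemma dyadicLevelSet_subset (S : Set Ω) (G : Ω → ℝ) (k : ℤ) : dyadicLevelSet S G k ⊆ S :=
  Set.inter_subset_left

lemma pairwise_disjoint_dyadicLevelSet (S : Set Ω) (G : Ω → ℝ) :
    Pairwise (Function.onFun Disjoint (dyadicLevelSet S G)) := by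
  refine (pairwise_disjoint_on _).2 fun k l hkl => Set.disjoint_left.2 fun x hk hl => ?_
  have : (2 : ℝ) ^ (k + 1) ≤ 2 ^ l := zpow_le_zpow_right₀ one_le_two (by omega)
  linarith [hk.2.2, hl.2.1]

variable [MeasurableSpace Ω]

lemma measurableSet_dyadicLevelSet {S : Set Ω} (hS : MeasurableSet S) {G : Ω → ℝ}
    (hG : Measurable G) (k : ℤ) : MeasurableSet (dyadicLevelSet S G k) :=
  hS.inter (hG measurableSet_Ioc)

lemma setLIntegral_ofReal_rpow_le_tsum_dyadicLevelSet (ν : Measure Ω) (S : Set Ω) (G : Ω → ℝ)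
    {p : ℝ} (hp : 0 < p) :
    ∫⁻ x in S, ENNReal.ofReal (G x) ^ p ∂ν ≤
      2 ^ p * ∑' k : ℤ, ENNReal.ofReal (2 ^ k) ^ p * ν (dyadicLevelSet S G k) := by
  have hcover : S ⊆ (⋃ k, dyadicLevelSet S G k) ∪ {x | G x ≤ 0} := by
    intro x hx
    rcases le_or_gt (G x) 0 with h | h
    · exact Or.inr h
    · obtain ⟨k, hk⟩ := exists_mem_Ioc_zpow h one_lt_two
      exact Or.inl (Set.mem_iUnion.2 ⟨k, hx, hk⟩)
  have hnonpos : ∫⁻ x in {x | G x ≤ 0}, ENNReal.ofReal (G x) ^ p ∂ν = 0 :=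
    nonpos_iff_eq_zero.1 <| (setLIntegral_mono measurable_const fun x (hx : G x ≤ 0) => by
      rw [ENNReal.ofReal_of_nonpos hx, ENNReal.zero_rpow_of_pos hp]).trans_eq lintegral_zero
  have hlevel : ∀ k : ℤ, ∫⁻ x in dyadicLevelSet S G k, ENNReal.ofReal (G x) ^ p ∂ν ≤
      2 ^ p * (ENNReal.ofReal (2 ^ k) ^ p * ν (dyadicLevelSet S G k)) := fun k =>
    calc ∫⁻ x in dyadicLevelSet S G k, ENNReal.ofReal (G x) ^ p ∂ν
        ≤ ∫⁻ _ in dyadicLevelSet S G k, ENNReal.ofReal (2 ^ (k + 1)) ^ p ∂ν :=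
          setLIntegral_mono measurable_const fun x hx => by gcongr; exact hx.2.2
      _ = _ := by
          rw [setLIntegral_const, zpow_add_one₀ two_ne_zero, mul_comm _ (2 : ℝ),
            ENNReal.ofReal_mul zero_le_two, ENNReal.ofReal_ofNat,
            ENNReal.mul_rpow_of_nonneg _ _ hp.le, mul_assoc]
  calc ∫⁻ x in S, ENNReal.ofReal (G x) ^ p ∂ν
      ≤ ∫⁻ x in (⋃ k, dyadicLevelSet S G k) ∪ {x | G x ≤ 0}, ENNReal.ofReal (G x) ^ p ∂ν :=
        lintegral_mono_set hcover
    _ ≤ ∫⁻ x in ⋃ k, dyadicLevelSet S G k, ENNReal.ofReal (G x) ^ p ∂ν :=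
        (lintegral_union_le _ _ _).trans_eq (by rw [hnonpos, add_zero])
    _ ≤ ∑' k : ℤ, ∫⁻ x in dyadicLevelSet S G k, ENNReal.ofReal (G x) ^ p ∂ν :=
        lintegral_iUnion_le _ _
    _ ≤ _ := (ENNReal.tsum_le_tsum hlevel).trans_eq ENNReal.tsum_mul_left

theorem setLIntegral_ofReal_rpow_le_of_dyadicLevelSet {ν α β : Measure Ω} {S : Set Ω}
    (hS : MeasurableSet S) {G : Ω → ℝ} (hG : Measurable G) {p r s : ℝ} (hp : 0 < p)
    (hr : 0 ≤ r) (hs : 0 ≤ s) (hrs : r + s = 1) {K : ℝ≥0∞}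
    (hlevel : ∀ k : ℤ, ENNReal.ofReal (2 ^ k) ^ p * ν (dyadicLevelSet S G k) ≤
      K * α (dyadicLevelSet S G k) ^ r * β (dyadicLevelSet S G k) ^ s) :
    ∫⁻ x in S, ENNReal.ofReal (G x) ^ p ∂ν ≤ 2 ^ p * K * α S ^ r * β S ^ s := by
  have hsum (γ : Measure Ω) : ∑' k, γ (dyadicLevelSet S G k) ≤ γ S :=
    (tsum_meas_le_meas_iUnion_of_disjoint γ (measurableSet_dyadicLevelSet hS hG)
      (pairwise_disjoint_dyadicLevelSet S G)).trans
      (measure_mono (Set.iUnion_subset (dyadicLevelSet_subset S G)))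
  calc ∫⁻ x in S, ENNReal.ofReal (G x) ^ p ∂ν
      ≤ 2 ^ p * ∑' k : ℤ, ENNReal.ofReal (2 ^ k) ^ p * ν (dyadicLevelSet S G k) :=
        setLIntegral_ofReal_rpow_le_tsum_dyadicLevelSet ν S G hp
    _ ≤ 2 ^ p * (K * ∑' k : ℤ, α (dyadicLevelSet S G k) ^ r * β (dyadicLevelSet S G k) ^ s) :=
        mul_le_mul_right ((ENNReal.tsum_le_tsum fun k =>
          (hlevel k).trans_eq (mul_assoc _ _ _)).trans_eq ENNReal.tsum_mul_left) _
    _ ≤ 2 ^ p * (K * ((∑' k, α (dyadicLevelSet S G k)) ^ r *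
          (∑' k, β (dyadicLevelSet S G k)) ^ s)) := by
        gcongr
        exact ENNReal.tsum_rpow_mul_rpow_le _ _ hr hs hrs
    _ ≤ 2 ^ p * (K * (α S ^ r * β S ^ s)) := by
        gcongr
        exacts [hsum α, hsum β]
    _ = 2 ^ p * K * α S ^ r * β S ^ s := by ring

end DyadicDecomposition

lemma condExp_indicator_ae_eq_of_subset {Ω E : Type*} {m m0 : MeasurableSpace Ω}
    [NormedAddCommGroup E] [NormedSpace ℝ E] [CompleteSpace E] {μ : Measure Ω} {f : Ω → E}
    (hf : Integrable f μ) {s t : Set Ω} (hs : MeasurableSet s) (ht : MeasurableSet[m] t)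
    (hts : t ⊆ s) :
    ∀ᵐ x ∂μ, x ∈ t → μ[s.indicator f|m] x = μ[f|m] x := by
  have h : t.indicator (μ[s.indicator f|m]) =ᵐ[μ] t.indicator (μ[f|m]) :=
    calc t.indicator (μ[s.indicator f|m])
        =ᵐ[μ] μ[t.indicator (s.indicator f)|m] := (condExp_indicator (hf.indicator hs) ht).symm
      _ = μ[t.indicator f|m] := by rw [Set.indicator_indicator, Set.inter_eq_left.2 hts]
      _ =ᵐ[μ] t.indicator (μ[f|m]) := condExp_indicator hf ht
  filter_upwards [h] with x hx hxt
  simpa only [Set.indicator_of_mem hxt] using hx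

namespace MeasureTheory.IsStoppingTime

variable {Ω : Type*} {m0 : MeasurableSpace Ω} {ℱ : Filtration ℕ m0} {τ : Ω → ℕ∞}

lemma measurableSet_ne_top (hτ : IsStoppingTime ℱ τ) :
    MeasurableSet {x | τ x ≠ ⊤} := by
  have : {x | τ x ≠ ⊤} = ⋃ n : ℕ, {x | τ x ≤ n} := by
    ext x
    simp only [Set.mem_ofPred_eq, Set.mem_iUnion]
    constructor
    · intro h
      obtain ⟨n, hn⟩ := ENat.ne_top_iff_exists.1 h
      exact ⟨n, hn.ge⟩
    · rintro ⟨n, hn⟩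
      exact (hn.trans_lt (ENat.natCast_lt_top n)).ne
  rw [this]
  exact .iUnion fun n => ℱ.le n _ (hτ n)

lemma measurable_enat (hτ : IsStoppingTime ℱ τ) : Measurable τ := by
  refine measurable_to_countable' fun y => ?_
  induction y using ENat.recTopCoe with
  | top =>
    convert hτ.measurableSet_ne_top.compl using 1
    ext x
    simp
  | coe n => exact ℱ.le n _ (hτ.measurableSet_eq_of_countable n)

lemma measurable_stopped (hτ : IsStoppingTime ℱ τ) {β : Type*}
    [MeasurableSpace β] {u : ℕ → Ω → β} (hu : ∀ n, Measurable[ℱ n] (u n)) :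
    Measurable fun x => u (τ x).toNat x :=
  (measurable_from_prod_countable_left (f := fun q : Ω × ℕ => u q.2 q.1)
    fun n => (hu n).mono (ℱ.le n) le_rfl).comp
    (measurable_id.prodMk ((measurable_from_top (f := ENat.toNat)).comp hτ.measurable_enat))

lemma measurableSet_stopped_preimage_inter_eq (hτ : IsStoppingTime ℱ τ) {β : Type*}
    [MeasurableSpace β] {u : ℕ → Ω → β} (hu : ∀ n, Measurable[ℱ n] (u n))
    {t : Set β} (ht : MeasurableSet t) (n : ℕ) :
    MeasurableSet[ℱ n] ({x | τ x ≠ ⊤} ∩ (fun x => u (τ x).toNat x) ⁻¹' t ∩ {x | τ x = n}) := by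
  have : {x | τ x ≠ ⊤} ∩ (fun x => u (τ x).toNat x) ⁻¹' t ∩ {x | τ x = n} =
      u n ⁻¹' t ∩ {x | τ x = n} := by
    ext x
    by_cases hx : τ x = n <;> simp [hx]
  rw [this]
  exact (hu n ht).inter (hτ.measurableSet_eq_of_countable n)

lemma measurable_abs_stopped_condExp_mul {μ : Measure Ω}
    (hτ : IsStoppingTime ℱ τ) (f g : Ω → ℝ) :
    Measurable fun x => |(μ[f|ℱ (τ x).toNat]) x * (μ[g|ℱ (τ x).toNat]) x| :=
  hτ.measurable_stopped fun _ => continuous_abs.measurable.comp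
    (stronglyMeasurable_condExp.measurable.mul stronglyMeasurable_condExp.measurable)

end MeasureTheory.IsStoppingTime

section BilinearMaximal

variable {Ω : Type*} {m0 : MeasurableSpace Ω}

/-- `M(f, g)`, valued in `ℝ≥0∞` so that the supremum needs no boundedness. -/
def bilinearMaximal (μ : Measure Ω) (ℱ : Filtration ℕ m0) (f g : Ω → ℝ) (x : Ω) : ℝ≥0∞ :=
  ⨆ n, ENNReal.ofReal (|(μ[f|ℱ n]) x| * |(μ[g|ℱ n]) x|)

/-- `‖M(f, g)‖_{L^{p,∞}(v)} ≤ C ‖f‖_{L^{p₁}(ω₁)} ‖g‖_{L^{p₂}(ω₂)}`, the weak quasinorm being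
`sup_λ λ v({M(f, g) > λ})^{1/p}`. -/
def WeakTypeBound (μ : Measure Ω) (ℱ : Filtration ℕ m0) (v ω₁ ω₂ : Ω → ℝ) (p p₁ p₂ C : ℝ) :
    Prop :=
  ∀ f g : Ω → ℝ, Integrable f μ → Integrable (fun x => |f x| ^ p₁ * ω₁ x) μ →
    Integrable g μ → Integrable (fun x => |g x| ^ p₂ * ω₂ x) μ →
    ∀ lam : ℝ, 0 < lam →
      lam * (∫ x in {x | ENNReal.ofReal lam < bilinearMaximal μ ℱ f g x}, v x ∂μ) ^ (1 / p)
        ≤ C * (∫ x, |f x| ^ p₁ * ω₁ x ∂μ) ^ (1 / p₁) * (∫ x, |g x| ^ p₂ * ω₂ x ∂μ) ^ (1 / p₂)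

variable {μ : Measure Ω} {ℱ : Filtration ℕ m0} {τ : Ω → ℕ∞}

lemma ae_lt_bilinearMaximal_indicator {f g : Ω → ℝ} (hf : Integrable f μ) (hg : Integrable g μ)
    {E : Set Ω} (hE : MeasurableSet E) (hEτ : ∀ n : ℕ, MeasurableSet[ℱ n] (E ∩ {x | τ x = n}))
    {lam : ℝ} (hlam : 0 ≤ lam)
    (hlt : ∀ x ∈ E, τ x ≠ ⊤ ∧ lam < |(μ[f|ℱ (τ x).toNat]) x| * |(μ[g|ℱ (τ x).toNat]) x|) :
    ∀ᵐ x ∂μ, x ∈ E →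
      ENNReal.ofReal lam < bilinearMaximal μ ℱ (E.indicator f) (E.indicator g) x := by
  have hf' : ∀ᵐ x ∂μ, ∀ n : ℕ, x ∈ E ∩ {x | τ x = n} → μ[E.indicator f|ℱ n] x = μ[f|ℱ n] x :=
    ae_all_iff.2 fun n => condExp_indicator_ae_eq_of_subset hf hE (hEτ n) Set.inter_subset_left
  have hg' : ∀ᵐ x ∂μ, ∀ n : ℕ, x ∈ E ∩ {x | τ x = n} → μ[E.indicator g|ℱ n] x = μ[g|ℱ n] x :=
    ae_all_iff.2 fun n => condExp_indicator_ae_eq_of_subset hg hE (hEτ n) Set.inter_subset_left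
  filter_upwards [hf', hg'] with x hxf hxg hxE
  obtain ⟨hτx, hltx⟩ := hlt x hxE
  have hxn : x ∈ E ∩ {x | τ x = (τ x).toNat} := ⟨hxE, (ENat.natCast_toNat hτx).symm⟩
  calc ENNReal.ofReal lam
      < ENNReal.ofReal (|(μ[E.indicator f|ℱ (τ x).toNat]) x| *
          |(μ[E.indicator g|ℱ (τ x).toNat]) x|) := by
        rw [hxf _ hxn, hxg _ hxn]
        exact (ENNReal.ofReal_lt_ofReal_iff_of_nonneg hlam).2 hltx
    _ ≤ bilinearMaximal μ ℱ (E.indicator f) (E.indicator g) x :=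
        le_iSup (fun n => ENNReal.ofReal (|(μ[E.indicator f|ℱ n]) x| *
          |(μ[E.indicator g|ℱ n]) x|)) _

lemma WeakTypeBound.ofReal_rpow_mul_withDensity_le {v ω₁ ω₂ : Ω → ℝ} {p p₁ p₂ C : ℝ}
    (hH : WeakTypeBound μ ℱ v ω₁ ω₂ p p₁ p₂ C) (hv : 0 ≤ v) (hvI : Integrable v μ)
    (hω₁ : 0 ≤ ω₁) (hω₂ : 0 ≤ ω₂) (hp : 0 < p) (hp₁ : 0 < p₁) (hp₂ : 0 < p₂) (hC : 0 ≤ C)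
    {f g : Ω → ℝ} (hf : Integrable f μ) (hfω : Integrable (fun x => |f x| ^ p₁ * ω₁ x) μ)
    (hg : Integrable g μ) (hgω : Integrable (fun x => |g x| ^ p₂ * ω₂ x) μ)
    {E : Set Ω} (hE : MeasurableSet E)
    (hEτ : ∀ n : ℕ, MeasurableSet[ℱ n] (E ∩ {x | τ x = n})) {lam : ℝ} (hlam : 0 < lam)
    (hlt : ∀ x ∈ E, τ x ≠ ⊤ ∧ lam < |(μ[f|ℱ (τ x).toNat]) x| * |(μ[g|ℱ (τ x).toNat]) x|) :
    ENNReal.ofReal lam ^ p * μ.withDensity (fun x => ENNReal.ofReal (v x)) E ≤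
      ENNReal.ofReal C ^ p *
        μ.withDensity (fun x => ENNReal.ofReal (|f x| ^ p₁ * ω₁ x)) E ^ (p / p₁) *
        μ.withDensity (fun x => ENNReal.ofReal (|g x| ^ p₂ * ω₂ x)) E ^ (p / p₂) := by
  have hfω0 : 0 ≤ fun x => |f x| ^ p₁ * ω₁ x := fun x => mul_nonneg (by positivity) (hω₁ x)
  have hgω0 : 0 ≤ fun x => |g x| ^ p₂ * ω₂ x := fun x => mul_nonneg (by positivity) (hω₂ x)
  have hfE := abs_indicator_rpow_mul hp₁.ne' E f ω₁
  have hgE := abs_indicator_rpow_mul hp₂.ne' E g ω₂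
  have hweak := hH _ _ (hf.indicator hE) (hfE ▸ hfω.indicator hE) (hg.indicator hE)
    (hgE ▸ hgω.indicator hE) lam hlam
  rw [hfE, hgE, integral_indicator hE, integral_indicator hE] at hweak
  have hmono : ∫ x in E, v x ∂μ ≤
      ∫ x in {x | ENNReal.ofReal lam < bilinearMaximal μ ℱ (E.indicator f) (E.indicator g) x},
        v x ∂μ :=
    setIntegral_mono_set hvI.integrableOn (ae_of_all _ hv)
      (ae_lt_bilinearMaximal_indicator hf hg hE hEτ hlam.le hlt)
  have hvE : 0 ≤ ∫ x in E, v x ∂μ := setIntegral_nonneg hE fun x _ => hv x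
  rw [withDensity_ofReal_apply hvI hv hE, withDensity_ofReal_apply hfω hfω0 hE,
    withDensity_ofReal_apply hgω hgω0 hE, ← ofReal_mul_rpow_mul_rpow_rpow hp.le hp₁.le hp₂.le hC
      (setIntegral_nonneg hE fun x _ => hfω0 x) (setIntegral_nonneg hE fun x _ => hgω0 x)]
  refine ofReal_rpow_mul_ofReal_le_of_mul_rpow_le hp hlam.le hvE (le_trans ?_ hweak)
  gcongr

theorem WeakTypeBound.setLIntegral_rpow_stopped_le {v ω₁ ω₂ : Ω → ℝ} {p p₁ p₂ C : ℝ}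
    (hH : WeakTypeBound μ ℱ v ω₁ ω₂ p p₁ p₂ C) (hv : 0 ≤ v) (hvI : Integrable v μ)
    (hω₁ : 0 ≤ ω₁) (hω₂ : 0 ≤ ω₂) (hp₁ : 0 < p₁) (hp₂ : 0 < p₂) (hp : 1 / p = 1 / p₁ + 1 / p₂)
    (hC : 0 ≤ C) (hτ : IsStoppingTime ℱ τ)
    {f g : Ω → ℝ} (hf : Integrable f μ) (hfω : Integrable (fun x => |f x| ^ p₁ * ω₁ x) μ)
    (hg : Integrable g μ) (hgω : Integrable (fun x => |g x| ^ p₂ * ω₂ x) μ) :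
    ∫⁻ x in {x | τ x ≠ ⊤}, ENNReal.ofReal |(μ[f|ℱ (τ x).toNat]) x * (μ[g|ℱ (τ x).toNat]) x| ^ p
        ∂μ.withDensity (fun x => ENNReal.ofReal (v x)) ≤
      ENNReal.ofReal (2 * C * (∫ x, |f x| ^ p₁ * ω₁ x ∂μ) ^ (1 / p₁) *
        (∫ x, |g x| ^ p₂ * ω₂ x ∂μ) ^ (1 / p₂)) ^ p := by
  have hp0 : 0 < p := one_div_pos.1 (hp ▸ by positivity)
  have hrs : p / p₁ + p / p₂ = 1 := by
    rw [div_eq_mul_one_div p p₁, div_eq_mul_one_div p p₂, ← mul_add, ← hp,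
      mul_one_div_cancel hp0.ne']
  have hfω0 : 0 ≤ fun x => |f x| ^ p₁ * ω₁ x := fun x => mul_nonneg (by positivity) (hω₁ x)
  have hgω0 : 0 ≤ fun x => |g x| ^ p₂ * ω₂ x := fun x => mul_nonneg (by positivity) (hω₂ x)
  have hu (n : ℕ) : Measurable[ℱ n] fun x => |(μ[f|ℱ n]) x * (μ[g|ℱ n]) x| :=
    continuous_abs.measurable.comp
      (stronglyMeasurable_condExp.measurable.mul stronglyMeasurable_condExp.measurable)
  have hG := hτ.measurable_abs_stopped_condExp_mul (μ := μ) f g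
  calc _ ≤ 2 ^ p * ENNReal.ofReal C ^ p *
          μ.withDensity (fun x => ENNReal.ofReal (|f x| ^ p₁ * ω₁ x)) {x | τ x ≠ ⊤} ^ (p / p₁) *
          μ.withDensity (fun x => ENNReal.ofReal (|g x| ^ p₂ * ω₂ x)) {x | τ x ≠ ⊤} ^ (p / p₂) :=
        setLIntegral_ofReal_rpow_le_of_dyadicLevelSet hτ.measurableSet_ne_top hG hp0
          (by positivity) (by positivity) hrs fun k =>
          hH.ofReal_rpow_mul_withDensity_le hv hvI hω₁ hω₂ hp0 hp₁ hp₂ hC hf hfω hg hgω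
            (measurableSet_dyadicLevelSet hτ.measurableSet_ne_top hG k)
            (hτ.measurableSet_stopped_preimage_inter_eq hu measurableSet_Ioc)
            (zpow_pos two_pos k) fun x hx => ⟨hx.1, by rw [← abs_mul]; exact hx.2.1⟩
    _ ≤ 2 ^ p * ENNReal.ofReal C ^ p *
          μ.withDensity (fun x => ENNReal.ofReal (|f x| ^ p₁ * ω₁ x)) Set.univ ^ (p / p₁) *
          μ.withDensity (fun x => ENNReal.ofReal (|g x| ^ p₂ * ω₂ x)) Set.univ ^ (p / p₂) := by
        gcongr <;> exact Set.subset_univ _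
    _ = _ := by
        rw [withDensity_ofReal_apply hfω hfω0 .univ, withDensity_ofReal_apply hgω hgω0 .univ,
          setIntegral_univ, setIntegral_univ, ofReal_mul_rpow_mul_rpow_rpow hp0.le hp₁.le
            hp₂.le (by positivity) (integral_nonneg hfω0) (integral_nonneg hgω0),
          ENNReal.ofReal_mul zero_le_two, ENNReal.ofReal_ofNat,
          ENNReal.mul_rpow_of_nonneg _ _ hp0.le]

end BilinearMaximal

theorem stmt_1_general
    {Ω : Type*} {m0 : MeasurableSpace Ω} {μ : Measure Ω}
    (ℱ : Filtration ℕ m0)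
    (v ω₁ ω₂ : Ω → ℝ)
    (hv : ∀ x, 0 < v x) (hω₁ : ∀ x, 0 < ω₁ x) (hω₂ : ∀ x, 0 < ω₂ x)
    (hvI : Integrable v μ)
    (p p₁ p₂ C : ℝ) (hp₁ : 1 < p₁) (hp₂ : 1 < p₂)
    (hp : 1 / p = 1 / p₁ + 1 / p₂) (hC : 0 < C)
    (H : ∀ f g : Ω → ℝ, Integrable f μ →
      Integrable (fun x => |f x| ^ p₁ * ω₁ x) μ →
      Integrable g μ →
      Integrable (fun x => |g x| ^ p₂ * ω₂ x) μ →
      ∀ lam : ℝ, 0 < lam →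
        lam * (∫ x in {x | ENNReal.ofReal lam <
            ⨆ n, ENNReal.ofReal (|(μ[f|ℱ n]) x| * |(μ[g|ℱ n]) x|)}, v x ∂μ) ^ (1 / p)
          ≤ C * (∫ x, |f x| ^ p₁ * ω₁ x ∂μ) ^ (1 / p₁)
              * (∫ x, |g x| ^ p₂ * ω₂ x ∂μ) ^ (1 / p₂)) :
    ∃ C' : ℝ, 0 < C' ∧
      ∀ τ : Ω → ℕ∞, (∀ n : ℕ, MeasurableSet[ℱ n] {x | τ x ≤ (n : ℕ∞)}) →
      ∀ f g : Ω → ℝ, Integrable f μ →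
        Integrable (fun x => |f x| ^ p₁ * ω₁ x) μ →
        Integrable g μ →
        Integrable (fun x => |g x| ^ p₂ * ω₂ x) μ →
        (∫ x in {x | τ x ≠ ⊤},
            |(μ[f|ℱ (τ x).toNat]) x * (μ[g|ℱ (τ x).toNat]) x| ^ p * v x ∂μ) ^ (1 / p)
          ≤ C' * (∫ x, |f x| ^ p₁ * ω₁ x ∂μ) ^ (1 / p₁)
              * (∫ x, |g x| ^ p₂ * ω₂ x ∂μ) ^ (1 / p₂) := by
  have hp₁0 : 0 < p₁ := by linarith
  have hp₂0 : 0 < p₂ := by linarith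
  have hp0 : 0 < p := one_div_pos.1 (hp ▸ by positivity)
  refine ⟨2 * C, by positivity, fun τ hτ f g hf hfω hg hgω => ?_⟩
  replace hτ : IsStoppingTime ℱ τ := hτ
  have hG := hτ.measurable_abs_stopped_condExp_mul (μ := μ) f g
  have hI₁ : 0 ≤ ∫ x, |f x| ^ p₁ * ω₁ x ∂μ := integral_nonneg fun x => by positivity [hω₁ x]
  have hI₂ : 0 ≤ ∫ x, |g x| ^ p₂ * ω₂ x ∂μ := integral_nonneg fun x => by positivity [hω₂ x]
  refine integral_rpow_one_div_le_of_lintegral_le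
    (ae_of_all _ fun x => mul_nonneg (Real.rpow_nonneg (abs_nonneg _) _) (hv x).le)
    ((hG.pow_const p).aestronglyMeasurable.mul hvI.aestronglyMeasurable.restrict) hp0
    (by positivity) ?_
  rw [← setLIntegral_withDensity_ofReal_rpow hG (fun x => abs_nonneg _) hvI.aemeasurable hp0.le
    hτ.measurableSet_ne_top]
  exact WeakTypeBound.setLIntegral_rpow_stopped_le H (fun x => (hv x).le) hvI
    (fun x => (hω₁ x).le) (fun x => (hω₂ x).le) hp₁0 hp₂0 hp hC.le hτ hf hfω hg hgω

theorem stmt_1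
    {Ω : Type*} {m0 : MeasurableSpace Ω} {μ : Measure Ω} [IsProbabilityMeasure μ]
    (ℱ : Filtration ℕ m0)
    (v ω₁ ω₂ : Ω → ℝ)
    (hv : ∀ x, 0 < v x) (hω₁ : ∀ x, 0 < ω₁ x) (hω₂ : ∀ x, 0 < ω₂ x)
    (hvI : Integrable v μ) (hω₁I : Integrable ω₁ μ) (hω₂I : Integrable ω₂ μ)
    (p p₁ p₂ C : ℝ) (hp₁ : 1 < p₁) (hp₂ : 1 < p₂)
    (hp : 1 / p = 1 / p₁ + 1 / p₂) (hC : 0 < C)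
    (H : ∀ f g : Ω → ℝ, Integrable f μ →
      Integrable (fun x => |f x| ^ p₁ * ω₁ x) μ →
      Integrable g μ →
      Integrable (fun x => |g x| ^ p₂ * ω₂ x) μ →
      ∀ lam : ℝ, 0 < lam →
        lam * (∫ x in {x | ENNReal.ofReal lam <
            ⨆ n, ENNReal.ofReal (|(μ[f|ℱ n]) x| * |(μ[g|ℱ n]) x|)}, v x ∂μ) ^ (1 / p)
          ≤ C * (∫ x, |f x| ^ p₁ * ω₁ x ∂μ) ^ (1 / p₁)
              * (∫ x, |g x| ^ p₂ * ω₂ x ∂μ) ^ (1 / p₂)) :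
    ∃ C' : ℝ, 0 < C' ∧
      ∀ τ : Ω → ℕ∞, (∀ n : ℕ, MeasurableSet[ℱ n] {x | τ x ≤ (n : ℕ∞)}) →
      ∀ f g : Ω → ℝ, Integrable f μ →
        Integrable (fun x => |f x| ^ p₁ * ω₁ x) μ →
        Integrable g μ →
        Integrable (fun x => |g x| ^ p₂ * ω₂ x) μ →
        (∫ x in {x | τ x ≠ ⊤},
            |(μ[f|ℱ (τ x).toNat]) x * (μ[g|ℱ (τ x).toNat]) x| ^ p * v x ∂μ) ^ (1 / p)
          ≤ C' * (∫ x, |f x| ^ p₁ * ω₁ x ∂μ) ^ (1 / p₁)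
              * (∫ x, |g x| ^ p₂ * ω₂ x ∂μ) ^ (1 / p₂) :=
  stmt_1_general ℱ v ω₁ ω₂ hv hω₁ hω₂ hvI p p₁ p₂ C hp₁ hp₂ hp hC H

end
end

section
/- Let v, ω₁, ω₂ be weights with σ_i = ω_i^{-1/(p_i - 1)} ∈ L¹, 1 < p₁, p₂ < ∞, 1/p = 1/p₁ + 1/p₂. If the triple (v, ω₁, ω₂) satisfies the bilinear martingale A_{p⃗} condition sup_n E_n(v)^{1/p} E_n(ω₁^{1-p₁'})^{1/p₁'} E_n(ω₂^{1-p₂'})^{1/p₂'} ≤ C, then the pointwise domination M(f,g) ≤ C' M^v(f^{p₁} ω₁ v^{-1})^{1/p₁} M^v(g^{p₂} ω₂ v^{-1})^{1/p₂} holds, where M^v denotes the martingale maximal operator with respect to the probability measure proportional to v dμ. -/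
/-!
By conditional Hölder, `E_n |f| ≤ E_n (|f|^{p₁} ω₁)^{1/p₁} E_n (σ₁)^{1/p₁'}`, and the change of
measure `E_n h = E_n^v (h / v) · E_n v` rewrites the first factor as
`E_n^v (|f|^{p₁} ω₁ / v)^{1/p₁} (E_n v)^{1/p₁}`. Multiplying with the same bound for `g`, the
powers of `E_n v` combine to `(E_n v)^{1/p}` because `1/p = 1/p₁ + 1/p₂`, and the bilinear `A_p⃗`
condition bounds what is left of the weights by `C`.

Conditional Hölder itself comes from Young's inequality `ab ≤ t^p a^p/p + t^{-q} b^q/q`: conditioning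
it for all rational `t > 0` simultaneously and then optimizing over `t` pointwise.
-/

open MeasureTheory Filter ENNReal Topology

namespace Real

theorem young_inequality_of_nonneg_of_pos {a b t p q : ℝ} (hpq : p.HolderConjugate q)
    (ha : 0 ≤ a) (hb : 0 ≤ b) (ht : 0 < t) :
    a * b ≤ t ^ p * a ^ p / p + t ^ (-q) * b ^ q / q := by
  have h := young_inequality_of_nonneg (mul_nonneg ht.le ha) (div_nonneg hb ht.le) hpq
  rwa [show t * a * (b / t) = a * b by field_simp, mul_rpow ht.le ha, div_rpow hb ht.le,
    div_eq_mul_inv (b ^ q), mul_comm (b ^ q), ← rpow_neg ht.le] at h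

theorem exists_young_eq_rpow_mul_rpow {A B p q : ℝ} (hpq : p.HolderConjugate q)
    (hA : 0 < A) (hB : 0 < B) :
    ∃ t > 0, t ^ p * A / p + t ^ (-q) * B / q = A ^ (1 / p) * B ^ (1 / q) := by
  have hp := hpq.ne_zero
  have hq := hpq.symm.ne_zero
  have hBA : 0 < B / A := div_pos hB hA
  have hA' : A ^ (1 / p) = A / A ^ (1 / q) := by
    rw [← rpow_one_sub' hA.le (by rw [one_div, hpq.symm.one_sub_inv]; exact inv_ne_zero hp),
      one_div, one_div, hpq.symm.one_sub_inv]
  have hB' : B ^ (1 / q) = B / B ^ (1 / p) := by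
    rw [← rpow_one_sub' hB.le (by rw [one_div, hpq.one_sub_inv]; exact inv_ne_zero hq),
      one_div, one_div, hpq.one_sub_inv]
  have hpow : ∀ r, ((B / A) ^ (1 / (p * q))) ^ r = (B / A) ^ (r / (p * q)) := fun r => by
    rw [← rpow_mul hBA.le, one_div_mul_eq_div]
  -- This `t` makes the two terms of Young's bound equal.
  refine ⟨(B / A) ^ (1 / (p * q)), rpow_pos_of_pos hBA _, ?_⟩
  have e₁ : ((B / A) ^ (1 / (p * q))) ^ p * A = A ^ (1 / p) * B ^ (1 / q) := by
    rw [hpow, show p / (p * q) = 1 / q by field_simp, div_rpow hB.le hA.le, hA']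
    field_simp
  have e₂ : ((B / A) ^ (1 / (p * q))) ^ (-q) * B = A ^ (1 / p) * B ^ (1 / q) := by
    rw [hpow, show -q / (p * q) = -(1 / p) by field_simp, rpow_neg hBA.le, ← inv_rpow hBA.le,
      inv_div, div_rpow hA.le hB.le, hB']
    field_simp
  rw [e₁, e₂]
  linear_combination (A ^ (1 / p) * B ^ (1 / q)) * hpq.inv_add_inv_eq_one

theorem le_rpow_mul_rpow_of_forall_le_young {E A B p q : ℝ} (hpq : p.HolderConjugate q)
    (hA : 0 ≤ A) (hB : 0 ≤ B) (h : ∀ t > 0, E ≤ t ^ p * A / p + t ^ (-q) * B / q) :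
    E ≤ A ^ (1 / p) * B ^ (1 / q) := by
  have hp := hpq.pos
  have hq := hpq.symm.pos
  -- Shifting `A, B` by `ε` avoids the degenerate case where no optimal `t` exists.
  have hε : ∀ ε > 0, E ≤ (A + ε) ^ (1 / p) * (B + ε) ^ (1 / q) := fun ε hε => by
    obtain ⟨t, ht, heq⟩ := exists_young_eq_rpow_mul_rpow (A := A + ε) (B := B + ε) hpq
      (by linarith) (by linarith)
    refine (h t ht).trans (heq ▸ ?_)
    gcongr <;> linarith
  have hcont : ContinuousAt (fun ε => (A + ε) ^ (1 / p) * (B + ε) ^ (1 / q)) 0 :=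
    ((continuousAt_const.add continuousAt_id).rpow_const (.inr (by positivity))).mul
      ((continuousAt_const.add continuousAt_id).rpow_const (.inr (by positivity)))
  simpa using ge_of_tendsto (hcont.tendsto.mono_left nhdsWithin_le_nhds)
    (eventually_nhdsWithin_of_forall (s := Set.Ioi 0) hε)

theorem le_of_forall_rat_pos_le {g : ℝ → ℝ} {E t : ℝ} (hg : ContinuousAt g t) (ht : 0 < t)
    (h : ∀ r : ℚ, 0 < (r : ℝ) → E ≤ g r) : E ≤ g t := by
  have hne : (𝓝[Set.range ((↑) : ℚ → ℝ)] t).NeBot := Rat.denseRange_cast.nhdsWithin_neBot t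
  refine ge_of_tendsto (hg.continuousWithinAt (s := Set.range ((↑) : ℚ → ℝ))).tendsto ?_
  filter_upwards [self_mem_nhdsWithin, nhdsWithin_le_nhds (eventually_gt_nhds ht)]
    with s ⟨r, hr⟩ hs
  exact hr ▸ h r (hr ▸ hs)

end Real

section CondHolder

variable {Ω : Type*} {m m0 : MeasurableSpace Ω} {μ : Measure Ω}

theorem condExp_mul_le_Lp_mul_Lq_of_nonneg {φ ψ : Ω → ℝ} {p q : ℝ} (hpq : p.HolderConjugate q)
    (hφ : ∀ x, 0 ≤ φ x) (hψ : ∀ x, 0 ≤ ψ x) (hφψ : Integrable (fun x => φ x * ψ x) μ)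
    (hφp : Integrable (fun x => φ x ^ p) μ) (hψq : Integrable (fun x => ψ x ^ q) μ) :
    ∀ᵐ x ∂μ, μ[fun x => φ x * ψ x|m] x ≤
      μ[fun x => φ x ^ p|m] x ^ (1 / p) * μ[fun x => ψ x ^ q|m] x ^ (1 / q) := by
  have hyoung : ∀ t : ℝ, ∀ᵐ x ∂μ, 0 < t → μ[fun x => φ x * ψ x|m] x ≤
      t ^ p * μ[fun x => φ x ^ p|m] x / p + t ^ (-q) * μ[fun x => ψ x ^ q|m] x / q := by
    intro t
    rcases le_or_gt t 0 with ht | ht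
    · exact ae_of_all _ fun _ h => absurd h ht.not_gt
    have hle : (fun x => φ x * ψ x) ≤ (t ^ p / p) • (fun x => φ x ^ p)
        + (t ^ (-q) / q) • (fun x => ψ x ^ q) := fun x => by
      simpa only [Pi.add_apply, Pi.smul_apply, smul_eq_mul, mul_div_right_comm]
        using Real.young_inequality_of_nonneg_of_pos hpq (hφ x) (hψ x) ht
    have hφp' := hφp.smul (t ^ p / p)
    have hψq' := hψq.smul (t ^ (-q) / q)
    filter_upwards [condExp_mono hφψ (hφp'.add hψq') (ae_of_all _ hle), condExp_add hφp' hψq' m,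
      condExp_smul (t ^ p / p) (fun x => φ x ^ p) m,
      condExp_smul (t ^ (-q) / q) (fun x => ψ x ^ q) m] with x hmono hadd hsmul₁ hsmul₂ _
    rw [hadd, Pi.add_apply, hsmul₁, hsmul₂] at hmono
    simpa only [Pi.smul_apply, smul_eq_mul, mul_div_right_comm] using hmono
  have hA : 0 ≤ᵐ[μ] μ[fun x => φ x ^ p|m] :=
    condExp_nonneg (ae_of_all μ fun x => Real.rpow_nonneg (hφ x) p)
  have hB : 0 ≤ᵐ[μ] μ[fun x => ψ x ^ q|m] :=
    condExp_nonneg (ae_of_all μ fun x => Real.rpow_nonneg (hψ x) q)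
  filter_upwards [ae_all_iff.2 fun r : ℚ => hyoung r, hA, hB] with x hx hAx hBx
  refine Real.le_rpow_mul_rpow_of_forall_le_young hpq hAx hBx fun t ht => ?_
  let g s := s ^ p * μ[fun x => φ x ^ p|m] x / p + s ^ (-q) * μ[fun x => ψ x ^ q|m] x / q
  have hg : ContinuousAt g t :=
    (((continuousAt_id.rpow_const (.inl ht.ne')).mul continuousAt_const).div_const _).add
      (((continuousAt_id.rpow_const (.inl ht.ne')).mul continuousAt_const).div_const _)
  exact Real.le_of_forall_rat_pos_le (g := g) hg ht hx

theorem abs_condExp_le_weighted {f ω : Ω → ℝ} {p : ℝ} (hp : 1 < p) (hω : ∀ x, 0 < ω x)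
    (hf : Integrable f μ) (hfω : Integrable (fun x => |f x| ^ p * ω x) μ)
    (hσ : Integrable (fun x => ω x ^ (-(1 / (p - 1)))) μ) :
    ∀ᵐ x ∂μ, |μ[f|m] x| ≤ μ[fun x => |f x| ^ p * ω x|m] x ^ (1 / p)
      * μ[fun x => ω x ^ (-(1 / (p - 1)))|m] x ^ ((p - 1) / p) := by
  have hp₀ : p ≠ 0 := by positivity
  let φ x := |f x| * ω x ^ (1 / p)
  let ψ x := ω x ^ (-(1 / p))
  have hφψ : (fun x => φ x * ψ x) = fun x => |f x| := funext fun x => by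
    simp only [φ, ψ, mul_assoc, ← Real.rpow_add (hω x), add_neg_cancel, Real.rpow_zero, mul_one]
  have hφp : (fun x => φ x ^ p) = fun x => |f x| ^ p * ω x := funext fun x => by
    simp only [φ, Real.mul_rpow (abs_nonneg _) (Real.rpow_nonneg (hω x).le _),
      ← Real.rpow_mul (hω x).le, one_div_mul_cancel hp₀, Real.rpow_one]
  have hψq : (fun x => ψ x ^ (p / (p - 1))) = fun x => ω x ^ (-(1 / (p - 1))) := funext fun x => by
    simp only [ψ, ← Real.rpow_mul (hω x).le]
    congr 1
    field_simp
  have hholder := condExp_mul_le_Lp_mul_Lq_of_nonneg (m := m)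
    (show p.HolderConjugate (p / (p - 1)) from .conjExponent hp)
    (fun x => mul_nonneg (abs_nonneg _) (Real.rpow_nonneg (hω x).le _))
    (fun x => Real.rpow_nonneg (hω x).le _)
    (hφψ ▸ hf.abs) (hφp ▸ hfω) (hψq ▸ hσ)
  rw [hφψ, hφp, hψq, one_div_div] at hholder
  filter_upwards [abs_condExp_ae_le_condExp_abs (m := m) (μ := μ) f, hholder] with x h₁ h₂
  exact h₁.trans h₂

end CondHolder

section WeightedMeasure

variable {Ω : Type*} {m m0 : MeasurableSpace Ω} {μ : Measure Ω} {v : Ω → ℝ} {c : ℝ≥0∞}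

theorem integrable_smul_withDensity_ofReal_iff (hc₀ : c ≠ 0) (hc : c ≠ ∞) (hv : ∀ x, 0 ≤ v x)
    (hvm : AEMeasurable v μ) {G : Ω → ℝ} :
    Integrable G (c • μ.withDensity fun x => ENNReal.ofReal (v x)) ↔
      Integrable (fun x => v x * G x) μ := by
  rw [integrable_smul_measure hc₀ hc, integrable_withDensity_iff_integrable_smul₀'
    hvm.ennreal_ofReal (ae_of_all _ fun _ => ofReal_lt_top)]
  simp only [ENNReal.toReal_ofReal (hv _), smul_eq_mul]

theorem setIntegral_smul_withDensity_ofReal (hv : ∀ x, 0 ≤ v x) (hvm : AEMeasurable v μ)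
    (G : Ω → ℝ) {s : Set Ω} (hs : MeasurableSet s) :
    ∫ x in s, G x ∂(c • μ.withDensity fun x => ENNReal.ofReal (v x)) =
      c.toReal * ∫ x in s, v x * G x ∂μ := by
  rw [Measure.restrict_smul, integral_smul_measure, smul_eq_mul,
    setIntegral_withDensity_eq_setIntegral_toReal_smul₀ hvm.ennreal_ofReal.restrict
      (ae_of_all _ fun _ => ofReal_lt_top) G hs]
  simp only [ENNReal.toReal_ofReal (hv _), smul_eq_mul]

theorem condExp_smul_withDensity_div_mul_condExp (hm : m ≤ m0) [SigmaFinite (μ.trim hm)]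
    (hc₀ : c ≠ 0) (hc : c ≠ ∞) (hv : ∀ x, 0 < v x) (hvI : Integrable v μ) {H : Ω → ℝ}
    (hH : Integrable H μ) :
    (fun x => (c • μ.withDensity fun x => ENNReal.ofReal (v x))[fun y => H y / v y|m] x
      * μ[v|m] x) =ᵐ[μ] μ[H|m] := by
  set ν := c • μ.withDensity fun x => ENNReal.ofReal (v x)
  have hv₀ x := (hv x).le
  have := isFiniteMeasure_withDensity_ofReal hvI.2
  have := Measure.smul_finite (μ.withDensity fun x => ENNReal.ofReal (v x)) hc
  have hcancel x : v x * (H x / v x) = H x := mul_div_cancel₀ _ (hv x).ne'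
  set F := ν[fun y => H y / v y|m]
  have hHv : Integrable (fun y => H y / v y) ν := by
    rwa [integrable_smul_withDensity_ofReal_iff hc₀ hc hv₀ hvI.aemeasurable, funext hcancel]
  have hFv : Integrable (fun x => F x * v x) μ := by
    simpa only [mul_comm (v _)] using
      (integrable_smul_withDensity_ofReal_iff hc₀ hc hv₀ hvI.aemeasurable).1 integrable_condExp
  have hsetInt : ∀ s, MeasurableSet[m] s → ∫ x in s, F x * v x ∂μ = ∫ x in s, H x ∂μ := by
    intro s hs
    have h := setIntegral_condExp hm hHv hs
    rw [setIntegral_smul_withDensity_ofReal hv₀ hvI.aemeasurable _ (hm s hs),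
      setIntegral_smul_withDensity_ofReal hv₀ hvI.aemeasurable _ (hm s hs)] at h
    simp only [hcancel] at h
    simp only [mul_comm (F _)]
    exact mul_left_cancel₀ (ENNReal.toReal_ne_zero.2 ⟨hc₀, hc⟩) h
  have hpull : μ[F * v|m] =ᵐ[μ] F * μ[v|m] :=
    condExp_mul_of_stronglyMeasurable_left stronglyMeasurable_condExp hFv hvI
  refine hpull.symm.trans (ae_eq_condExp_of_forall_setIntegral_eq hm hH
    (fun s _ _ => integrable_condExp.integrableOn) (fun s hs _ => ?_)
    stronglyMeasurable_condExp.aestronglyMeasurable)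
  exact (setIntegral_condExp hm hFv hs).trans (hsetInt s hs)

theorem abs_condExp_le_smul_withDensity (hm : m ≤ m0) [SigmaFinite (μ.trim hm)]
    (hc₀ : c ≠ 0) (hc : c ≠ ∞) (hv : ∀ x, 0 < v x) (hvI : Integrable v μ)
    {f ω : Ω → ℝ} {p : ℝ} (hp : 1 < p) (hω : ∀ x, 0 < ω x) (hf : Integrable f μ)
    (hfω : Integrable (fun x => |f x| ^ p * ω x) μ)
    (hσ : Integrable (fun x => ω x ^ (-(1 / (p - 1)))) μ) :
    ∀ᵐ x ∂μ, |μ[f|m] x| ≤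
      |(c • μ.withDensity fun x => ENNReal.ofReal (v x))[fun y => |f y| ^ p * ω y / v y|m] x|
        ^ (1 / p) * μ[v|m] x ^ (1 / p) * μ[fun x => ω x ^ (-(1 / (p - 1)))|m] x ^ ((p - 1) / p) := by
  filter_upwards [abs_condExp_le_weighted (m := m) hp hω hf hfω hσ,
    condExp_smul_withDensity_div_mul_condExp hm hc₀ hc hv hvI hfω,
    condExp_nonneg (m := m) (ae_of_all μ fun x => (hv x).le),
    condExp_nonneg (m := m) (ae_of_all μ fun x =>
      mul_nonneg (Real.rpow_nonneg (abs_nonneg (f x)) p) (hω x).le),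
    condExp_nonneg (m := m) (ae_of_all μ fun x => Real.rpow_nonneg (hω x).le (-(1 / (p - 1))))] with
    x hholder hdens hV hA hS
  refine hholder.trans (mul_le_mul_of_nonneg_right ?_ (Real.rpow_nonneg hS _))
  rw [← Real.mul_rpow (abs_nonneg _) hV, ← hdens]
  gcongr
  · exact hdens ▸ hA
  · exact le_abs_self _

theorem abs_condExp_mul_abs_condExp_le (hm : m ≤ m0) [SigmaFinite (μ.trim hm)]
    (hc₀ : c ≠ 0) (hc : c ≠ ∞) (hv : ∀ x, 0 < v x) (hvI : Integrable v μ)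
    {f g ω₁ ω₂ : Ω → ℝ} {p p₁ p₂ C : ℝ} (hp₁ : 1 < p₁) (hp₂ : 1 < p₂)
    (hp : 1 / p = 1 / p₁ + 1 / p₂) (hω₁ : ∀ x, 0 < ω₁ x) (hω₂ : ∀ x, 0 < ω₂ x)
    (hf : Integrable f μ) (hfω : Integrable (fun x => |f x| ^ p₁ * ω₁ x) μ)
    (hg : Integrable g μ) (hgω : Integrable (fun x => |g x| ^ p₂ * ω₂ x) μ)
    (hσ₁ : Integrable (fun x => ω₁ x ^ (-(1 / (p₁ - 1)))) μ)
    (hσ₂ : Integrable (fun x => ω₂ x ^ (-(1 / (p₂ - 1)))) μ)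
    (hA : ∀ᵐ x ∂μ, μ[v|m] x ^ (1 / p)
        * μ[fun y => ω₁ y ^ (-(1 / (p₁ - 1)))|m] x ^ ((p₁ - 1) / p₁)
        * μ[fun y => ω₂ y ^ (-(1 / (p₂ - 1)))|m] x ^ ((p₂ - 1) / p₂) ≤ C) :
    ∀ᵐ x ∂μ, |μ[f|m] x| * |μ[g|m] x| ≤
      C * |(c • μ.withDensity fun x => ENNReal.ofReal (v x))[fun y => |f y| ^ p₁ * ω₁ y / v y|m] x|
          ^ (1 / p₁)
        * |(c • μ.withDensity fun x => ENNReal.ofReal (v x))[fun y => |g y| ^ p₂ * ω₂ y / v y|m] x|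
          ^ (1 / p₂) := by
  filter_upwards [abs_condExp_le_smul_withDensity hm hc₀ hc hv hvI hp₁ hω₁ hf hfω hσ₁,
    abs_condExp_le_smul_withDensity hm hc₀ hc hv hvI hp₂ hω₂ hg hgω hσ₂, hA,
    condExp_nonneg (m := m) (ae_of_all μ fun x => (hv x).le)] with x hbound₁ hbound₂ hAx hV
  set F := |(c • μ.withDensity fun x => ENNReal.ofReal (v x))[fun y => |f y| ^ p₁ * ω₁ y / v y|m] x|
    ^ (1 / p₁)
  set G := |(c • μ.withDensity fun x => ENNReal.ofReal (v x))[fun y => |g y| ^ p₂ * ω₂ y / v y|m] x|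
    ^ (1 / p₂)
  set V := μ[v|m] x
  set S₁ := μ[fun y => ω₁ y ^ (-(1 / (p₁ - 1)))|m] x ^ ((p₁ - 1) / p₁)
  set S₂ := μ[fun y => ω₂ y ^ (-(1 / (p₂ - 1)))|m] x ^ ((p₂ - 1) / p₂)
  have hFG : 0 ≤ F * G := mul_nonneg (Real.rpow_nonneg (abs_nonneg _) _)
    (Real.rpow_nonneg (abs_nonneg _) _)
  have hV' : V ^ (1 / p) = V ^ (1 / p₁) * V ^ (1 / p₂) := by
    rw [hp, Real.rpow_add' hV (by positivity)]
  calc |μ[f|m] x| * |μ[g|m] x|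
      ≤ (F * V ^ (1 / p₁) * S₁) * (G * V ^ (1 / p₂) * S₂) :=
        mul_le_mul hbound₁ hbound₂ (abs_nonneg _) (hbound₁.trans' (abs_nonneg _))
    _ = V ^ (1 / p) * S₁ * S₂ * (F * G) := by rw [hV']; ring
    _ ≤ C * (F * G) := mul_le_mul_of_nonneg_right hAx hFG
    _ = C * F * G := (mul_assoc _ _ _).symm

end WeightedMeasure

theorem ENNReal.ofReal_le_mul_iSup_rpow_mul_iSup_rpow {ι : Type*} {a C r s : ℝ} {u w : ι → ℝ}
    (hC : 0 ≤ C) (hr : 0 ≤ r) (hs : 0 ≤ s) (i : ι) (h : a ≤ C * |u i| ^ r * |w i| ^ s) :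
    ENNReal.ofReal a ≤
      ENNReal.ofReal C * (⨆ k, ENNReal.ofReal |u k|) ^ r * (⨆ k, ENNReal.ofReal |w k|) ^ s := by
  calc ENNReal.ofReal a ≤ ENNReal.ofReal (C * |u i| ^ r * |w i| ^ s) := ofReal_le_ofReal h
    _ = ENNReal.ofReal C * ENNReal.ofReal |u i| ^ r * ENNReal.ofReal |w i| ^ s := by
      rw [ofReal_mul (by positivity), ofReal_mul hC, ofReal_rpow_of_nonneg (abs_nonneg _) hr,
        ofReal_rpow_of_nonneg (abs_nonneg _) hs]
    _ ≤ _ := by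
      gcongr
      · exact le_iSup (fun k => ENNReal.ofReal |u k|) i
      · exact le_iSup (fun k => ENNReal.ofReal |w k|) i

theorem stmt_2_general
    {Ω : Type*} {m0 : MeasurableSpace Ω} {μ : Measure Ω} [IsProbabilityMeasure μ]
    (ℱ : Filtration ℕ m0)
    (v ω₁ ω₂ : Ω → ℝ)
    (hv : ∀ x, 0 < v x) (hω₁ : ∀ x, 0 < ω₁ x) (hω₂ : ∀ x, 0 < ω₂ x)
    (hvI : Integrable v μ)
    (p p₁ p₂ C : ℝ) (hp₁ : 1 < p₁) (hp₂ : 1 < p₂)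
    (hp : 1 / p = 1 / p₁ + 1 / p₂) (hC : 0 < C)
    (hσ₁I : Integrable (fun x => ω₁ x ^ (-(1 / (p₁ - 1)))) μ)
    (hσ₂I : Integrable (fun x => ω₂ x ^ (-(1 / (p₂ - 1)))) μ)
    (hA : ∀ n : ℕ, ∀ᵐ x ∂μ,
      (μ[v|ℱ n]) x ^ (1 / p)
        * (μ[fun y => ω₁ y ^ (-(1 / (p₁ - 1)))|ℱ n]) x ^ ((p₁ - 1) / p₁)
        * (μ[fun y => ω₂ y ^ (-(1 / (p₂ - 1)))|ℱ n]) x ^ ((p₂ - 1) / p₂) ≤ C) :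
    ∃ C' : ℝ, 0 < C' ∧
      ∀ f g : Ω → ℝ, Integrable f μ →
        Integrable (fun x => |f x| ^ p₁ * ω₁ x) μ →
        Integrable g μ →
        Integrable (fun x => |g x| ^ p₂ * ω₂ x) μ →
        ∀ᵐ x ∂μ,
          (⨆ n, ENNReal.ofReal (|(μ[f|ℱ n]) x| * |(μ[g|ℱ n]) x|))
            ≤ ENNReal.ofReal C'
              * (⨆ n, ENNReal.ofReal
                  |((((ENNReal.ofReal (∫ y, v y ∂μ))⁻¹ •
                      μ.withDensity fun y => ENNReal.ofReal (v y))[fun y =>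
                        |f y| ^ p₁ * ω₁ y / v y|ℱ n]) x)|) ^ (1 / p₁)
              * (⨆ n, ENNReal.ofReal
                  |((((ENNReal.ofReal (∫ y, v y ∂μ))⁻¹ •
                      μ.withDensity fun y => ENNReal.ofReal (v y))[fun y =>
                        |g y| ^ p₂ * ω₂ y / v y|ℱ n]) x)|) ^ (1 / p₂) := by
  refine ⟨C, hC, fun f g hf hfω hg hgω => ?_⟩
  have hvpos : 0 < ∫ y, v y ∂μ := by
    have hsupp : Function.support v = Set.univ := Set.eq_univ_of_forall fun x => (hv x).ne'
    simp [integral_pos_iff_support_of_nonneg (fun x => (hv x).le) hvI, hsupp]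
  have hbound n := abs_condExp_mul_abs_condExp_le (ℱ.le n) (ENNReal.inv_ne_zero.2 ofReal_ne_top)
    (inv_ne_top.2 (ofReal_pos.2 hvpos).ne') hv hvI hp₁ hp₂ hp hω₁ hω₂ hf hfω hg hgω hσ₁I hσ₂I (hA n)
  filter_upwards [ae_all_iff.2 hbound] with x hx
  exact iSup_le fun n =>
    ENNReal.ofReal_le_mul_iSup_rpow_mul_iSup_rpow hC.le (by positivity) (by positivity) n (hx n)

theorem stmt_2
    {Ω : Type*} {m0 : MeasurableSpace Ω} {μ : Measure Ω} [IsProbabilityMeasure μ]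
    (ℱ : Filtration ℕ m0)
    (v ω₁ ω₂ : Ω → ℝ)
    (hv : ∀ x, 0 < v x) (hω₁ : ∀ x, 0 < ω₁ x) (hω₂ : ∀ x, 0 < ω₂ x)
    (hvI : Integrable v μ) (hω₁I : Integrable ω₁ μ) (hω₂I : Integrable ω₂ μ)
    (p p₁ p₂ C : ℝ) (hp₁ : 1 < p₁) (hp₂ : 1 < p₂)
    (hp : 1 / p = 1 / p₁ + 1 / p₂) (hC : 0 < C)
    (hσ₁I : Integrable (fun x => ω₁ x ^ (-(1 / (p₁ - 1)))) μ)
    (hσ₂I : Integrable (fun x => ω₂ x ^ (-(1 / (p₂ - 1)))) μ)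
    (hA : ∀ n : ℕ, ∀ᵐ x ∂μ,
      (μ[v|ℱ n]) x ^ (1 / p)
        * (μ[fun y => ω₁ y ^ (-(1 / (p₁ - 1)))|ℱ n]) x ^ ((p₁ - 1) / p₁)
        * (μ[fun y => ω₂ y ^ (-(1 / (p₂ - 1)))|ℱ n]) x ^ ((p₂ - 1) / p₂) ≤ C) :
    ∃ C' : ℝ, 0 < C' ∧
      ∀ f g : Ω → ℝ, Integrable f μ →
        Integrable (fun x => |f x| ^ p₁ * ω₁ x) μ →
        Integrable g μ →
        Integrable (fun x => |g x| ^ p₂ * ω₂ x) μ →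
        ∀ᵐ x ∂μ,
          (⨆ n, ENNReal.ofReal (|(μ[f|ℱ n]) x| * |(μ[g|ℱ n]) x|))
            ≤ ENNReal.ofReal C'
              * (⨆ n, ENNReal.ofReal
                  |((((ENNReal.ofReal (∫ y, v y ∂μ))⁻¹ •
                      μ.withDensity fun y => ENNReal.ofReal (v y))[fun y =>
                        |f y| ^ p₁ * ω₁ y / v y|ℱ n]) x)|) ^ (1 / p₁)
              * (⨆ n, ENNReal.ofReal
                  |((((ENNReal.ofReal (∫ y, v y ∂μ))⁻¹ •
                      μ.withDensity fun y => ENNReal.ofReal (v y))[fun y =>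
                        |g y| ^ p₂ * ω₂ y / v y|ℱ n]) x)|) ^ (1 / p₂) :=
  stmt_2_general ℱ v ω₁ ω₂ hv hω₁ hω₂ hvI p p₁ p₂ C hp₁ hp₂ hp hC hσ₁I hσ₂I hA
end

section
/- Let v, ω₁, ω₂ be weights with σ_i = ω_i^{-1/(p_i-1)} ∈ L¹, 1 < p₁, p₂ < ∞, 1/p = 1/p₁ + 1/p₂, and suppose (ω₁, ω₂) satisfies the reverse Hölder condition RH(p₁,p₂): for every stopping time τ, (∫_{{τ<∞}} σ₁ dμ)^{p/p₁} (∫_{{τ<∞}} σ₂ dμ)^{p/p₂} ≤ C ∫_{{τ<∞}} σ₁^{p/p₁} σ₂^{p/p₂} dμ. If the stopped-martingale inequality (∫_{{τ<∞}} |f_τ g_τ|^p v dμ)^{1/p} ≤ C ‖f‖_{L^{p₁}(ω₁)} ‖g‖_{L^{p₂}(ω₂)} holds for all stopping times τ and all f, g, then (v, ω₁, ω₂) ∈ A_{p⃗}, i.e. sup_n E_n(v)^{1/p} E_n(σ₁)^{1/p₁'} E_n(σ₂)^{1/p₂'} ≤ C'. -/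
/-!
Fix `n` and put `sᵢ = 𝔼[σᵢ | ℱ n]`, `w = 𝔼[v | ℱ n]`. For `A ∈ ℱ n`, testing the stopped
inequality with the stopping time that equals `n` on `A` and `∞` off `A`, and with `f = 1_A σ₁`,
`g = 1_A σ₂` (so that `|f| ^ p₁ ω₁ = 1_A σ₁`), and then applying the reverse Hölder condition gives
`∫_A (s₁ s₂) ^ p v ≤ C ^ (p + 1) ∫_A σ₁ ^ (p / p₁) σ₂ ^ (p / p₂)`.
On the left `v` can be replaced by `w`. On the right a conditional Hölder inequality replaces `σᵢ`
by `sᵢ`; it comes from integrating the tangent-plane bound of the concave map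
`(a, b) ↦ a ^ (p / p₁) b ^ (p / p₂)` at `(s₁, s₂)`. Since
`(s₁ s₂) ^ p w = G s₁ ^ (p / p₁) s₂ ^ (p / p₂)` with `G = w s₁ ^ (p / p₁') s₂ ^ (p / p₂')`,
every `A ∈ ℱ n` on which `G > C ^ (p + 1) + 1` and on which `s₁, s₂` are bounded away from `0` and
`∞` is null. Hence `G ≤ C ^ (p + 1) + 1` a.e., and `G ^ (1 / p)` is the `A_p⃗` quantity.
-/

open MeasureTheory Filter Set

theorem rpow_le_rpow_add_rpow_of_mem_Icc {a b x : ℝ} (ha : 0 < a) (hx : x ∈ Icc a b) (r : ℝ) :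
    x ^ r ≤ a ^ r + b ^ r := by
  have hx₀ : 0 < x := ha.trans_le hx.1
  have hb : 0 < b := hx₀.trans_le hx.2
  rcases le_total 0 r with hr | hr
  · exact (Real.rpow_le_rpow hx₀.le hx.2 hr).trans (le_add_of_nonneg_left (by positivity))
  · exact (Real.rpow_le_rpow_of_nonpos ha hx.1 hr).trans (le_add_of_nonneg_right (by positivity))

theorem abs_rpow_mul_rpow_le_of_mem_Icc {a b x y : ℝ} (ha : 0 < a) (hx : x ∈ Icc a b)
    (hy : y ∈ Icc a b) (r₁ r₂ : ℝ) :
    |x ^ r₁ * y ^ r₂| ≤ (a ^ r₁ + b ^ r₁) * (a ^ r₂ + b ^ r₂) := by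
  have hx₀ : 0 < x := ha.trans_le hx.1
  have hy₀ : 0 < y := ha.trans_le hy.1
  have hb : 0 < b := hx₀.trans_le hx.2
  rw [abs_of_pos (by positivity)]
  exact mul_le_mul (rpow_le_rpow_add_rpow_of_mem_Icc ha hx r₁)
    (rpow_le_rpow_add_rpow_of_mem_Icc ha hy r₂) (by positivity) (by positivity)

/-- The concave, `1`-homogeneous function `(a, b) ↦ a ^ θ₁ * b ^ θ₂` lies below its tangent plane
at any point `(s, t)` of the open quadrant. -/
theorem rpow_mul_rpow_le_tangent {a b s t θ₁ θ₂ : ℝ} (ha : 0 ≤ a) (hb : 0 ≤ b) (hs : 0 < s)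
    (ht : 0 < t) (hθ₁ : 0 ≤ θ₁) (hθ₂ : 0 ≤ θ₂) (hθ : θ₁ + θ₂ = 1) :
    a ^ θ₁ * b ^ θ₂ ≤ θ₁ * (s ^ (θ₁ - 1) * t ^ θ₂ * a) + θ₂ * (s ^ θ₁ * t ^ (θ₂ - 1) * b) := by
  have hamgm := Real.geom_mean_le_arith_mean2_weighted hθ₁ hθ₂ (div_nonneg ha hs.le)
    (div_nonneg hb ht.le) hθ
  rw [Real.div_rpow ha hs.le, Real.div_rpow hb ht.le] at hamgm
  rw [Real.rpow_sub_one hs.ne', Real.rpow_sub_one ht.ne']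
  calc a ^ θ₁ * b ^ θ₂ = s ^ θ₁ * t ^ θ₂ * (a ^ θ₁ / s ^ θ₁ * (b ^ θ₂ / t ^ θ₂)) := by
        field_simp
    _ ≤ s ^ θ₁ * t ^ θ₂ * (θ₁ * (a / s) + θ₂ * (b / t)) := by gcongr
    _ = _ := by field_simp

theorem abs_rpow_neg_one_div_sub_one_rpow_mul_self {ω q : ℝ} (hω : 0 < ω) (hq : q ≠ 1) :
    |ω ^ (-(1 / (q - 1)))| ^ q * ω = ω ^ (-(1 / (q - 1))) := by
  have hq' : q - 1 ≠ 0 := sub_ne_zero.mpr hq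
  rw [abs_of_pos (Real.rpow_pos_of_pos hω _), ← Real.rpow_mul hω.le,
    ← Real.rpow_add_one hω.ne']
  congr 1
  field_simp
  ring

theorem mul_rpow_mul_rpow_le_rpow_one_div {w s t p p₁ p₂ K : ℝ} (hw : 0 ≤ w) (hs : 0 ≤ s)
    (ht : 0 ≤ t) (hp : 0 < p) (hp₁ : p₁ ≠ 0) (hp₂ : p₂ ≠ 0)
    (h : w * s ^ (p - p / p₁) * t ^ (p - p / p₂) ≤ K) :
    w ^ (1 / p) * s ^ ((p₁ - 1) / p₁) * t ^ ((p₂ - 1) / p₂) ≤ K ^ (1 / p) := by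
  calc _ = (w * s ^ (p - p / p₁) * t ^ (p - p / p₂)) ^ (1 / p) := by
        rw [Real.mul_rpow (by positivity) (by positivity), Real.mul_rpow hw (by positivity),
          ← Real.rpow_mul hs, ← Real.rpow_mul ht]
        congr 3 <;> field_simp
    _ ≤ K ^ (1 / p) := by gcongr

theorem eventually_mem_Icc_inv_natCast_add_one {s : ℝ} (hs : 0 < s) :
    ∀ᶠ M : ℕ in atTop, s ∈ Icc ((M : ℝ) + 1)⁻¹ ((M : ℝ) + 1) := by
  have h := tendsto_atTop_add_const_right atTop (1 : ℝ) tendsto_natCast_atTop_atTop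
  filter_upwards [h.eventually_ge_atTop s, h.eventually_ge_atTop s⁻¹] with M hs₁ hs₂
  exact ⟨inv_le_of_inv_le₀ hs hs₂, hs₁⟩

section ConditionalExpectation

variable {Ω : Type*} {m m0 : MeasurableSpace Ω} {μ : Measure Ω}

theorem integrableOn_mul_of_abs_le {φ g : Ω → ℝ} {A : Set Ω} {B : ℝ} (hA : MeasurableSet A)
    (hφ : AEStronglyMeasurable φ μ) (hφA : ∀ x ∈ A, |φ x| ≤ B) (hg : Integrable g μ) :
    IntegrableOn (fun x => φ x * g x) A μ :=
  hg.integrableOn.bdd_mul hφ.restrict (ae_restrict_of_forall_mem hA hφA)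

theorem setIntegral_pos_of_ae_pos {f : Ω → ℝ} {A : Set Ω} (hf : ∀ᵐ x ∂μ.restrict A, 0 < f x)
    (hfi : IntegrableOn f A μ) (hA : μ A ≠ 0) : 0 < ∫ x in A, f x ∂μ := by
  have hsupp : Function.support f =ᵐ[μ.restrict A] univ :=
    eventuallyEq_univ.2 (hf.mono fun x hx => hx.ne')
  rw [integral_pos_iff_support_of_nonneg_ae (hf.mono fun x hx => hx.le) hfi, measure_congr hsupp,
    Measure.restrict_apply_univ]
  exact pos_iff_ne_zero.2 hA

theorem integrableOn_rpow_mul_rpow_mul {s t h : Ω → ℝ} {A : Set Ω} {a b : ℝ}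
    (hA : MeasurableSet A) (ha : 0 < a) (hs : AEMeasurable s μ) (ht : AEMeasurable t μ)
    (hsA : ∀ x ∈ A, s x ∈ Icc a b) (htA : ∀ x ∈ A, t x ∈ Icc a b) (hh : Integrable h μ)
    (r₁ r₂ : ℝ) : IntegrableOn (fun x => s x ^ r₁ * t x ^ r₂ * h x) A μ :=
  integrableOn_mul_of_abs_le hA ((hs.pow_const r₁).mul (ht.pow_const r₂)).aestronglyMeasurable
    (fun x hx => abs_rpow_mul_rpow_le_of_mem_Icc ha (hsA x hx) (htA x hx) r₁ r₂) hh

theorem setIntegral_rpow_mul_rpow_le_tangent {f g s t : Ω → ℝ} {A : Set Ω} {a b θ₁ θ₂ : ℝ}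
    (hA : MeasurableSet A) (hf : 0 ≤ᵐ[μ] f) (hg : 0 ≤ᵐ[μ] g) (hfi : Integrable f μ)
    (hgi : Integrable g μ) (hθ₁ : 0 ≤ θ₁) (hθ₂ : 0 ≤ θ₂) (hθ : θ₁ + θ₂ = 1) (ha : 0 < a)
    (hs : AEMeasurable s μ) (ht : AEMeasurable t μ) (hsA : ∀ x ∈ A, s x ∈ Icc a b)
    (htA : ∀ x ∈ A, t x ∈ Icc a b) :
    ∫ x in A, f x ^ θ₁ * g x ^ θ₂ ∂μ ≤ θ₁ * ∫ x in A, s x ^ (θ₁ - 1) * t x ^ θ₂ * f x ∂μ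
      + θ₂ * ∫ x in A, s x ^ θ₁ * t x ^ (θ₂ - 1) * g x ∂μ := by
  have hI₁ := integrableOn_rpow_mul_rpow_mul hA ha hs ht hsA htA hfi (θ₁ - 1) θ₂
  have hI₂ := integrableOn_rpow_mul_rpow_mul hA ha hs ht hsA htA hgi θ₁ (θ₂ - 1)
  have hRi : IntegrableOn (fun x => θ₁ * (s x ^ (θ₁ - 1) * t x ^ θ₂ * f x)
      + θ₂ * (s x ^ θ₁ * t x ^ (θ₂ - 1) * g x)) A μ :=
    (hI₁.const_mul θ₁).add (hI₂.const_mul θ₂)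
  have htangent : ∀ᵐ x ∂μ, x ∈ A → f x ^ θ₁ * g x ^ θ₂ ≤ θ₁ * (s x ^ (θ₁ - 1) * t x ^ θ₂ * f x)
      + θ₂ * (s x ^ θ₁ * t x ^ (θ₂ - 1) * g x) := by
    filter_upwards [hf, hg] with x hfx hgx hx
    exact rpow_mul_rpow_le_tangent hfx hgx (ha.trans_le (hsA x hx).1)
      (ha.trans_le (htA x hx).1) hθ₁ hθ₂ hθ
  have hLi : IntegrableOn (fun x => f x ^ θ₁ * g x ^ θ₂) A μ := by
    refine hRi.mono' ((hfi.aemeasurable.pow_const _).mul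
      (hgi.aemeasurable.pow_const _)).aestronglyMeasurable.restrict ((ae_restrict_iff' hA).2 ?_)
    filter_upwards [hf, hg, htangent] with x hfx hgx hx hxA
    rw [Real.norm_of_nonneg (mul_nonneg (Real.rpow_nonneg hfx _) (Real.rpow_nonneg hgx _))]
    exact hx hxA
  rw [← integral_const_mul, ← integral_const_mul,
    ← integral_add (hI₁.const_mul θ₁) (hI₂.const_mul θ₂)]
  exact setIntegral_mono_on_ae hLi hRi hA htangent

variable [IsFiniteMeasure μ]

theorem condExp_pos (hm : m ≤ m0) {f : Ω → ℝ} (hf : ∀ᵐ x ∂μ, 0 < f x) (hfi : Integrable f μ) :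
    ∀ᵐ x ∂μ, 0 < μ[f|m] x := by
  set D := {x | μ[f|m] x ≤ 0}
  have hD : MeasurableSet[m] D :=
    measurableSet_le stronglyMeasurable_condExp.measurable measurable_const
  have hD_int : ∫ x in D, f x ∂μ ≤ 0 := by
    rw [← setIntegral_condExp hm hfi hD]
    exact setIntegral_nonpos (hm _ hD) fun x hx => hx
  have hD_null : μ D = 0 := by
    by_contra hD_pos
    linarith [setIntegral_pos_of_ae_pos (ae_restrict_of_ae hf) hfi.integrableOn hD_pos]
  filter_upwards [measure_eq_zero_iff_ae_notMem.1 hD_null] with x hx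
  simpa [D] using hx

theorem setIntegral_mul_condExp (hm : m ≤ m0) {φ g : Ω → ℝ} {A : Set Ω} {B : ℝ}
    (hA : MeasurableSet[m] A) (hφ : StronglyMeasurable[m] φ) (hφA : ∀ x ∈ A, |φ x| ≤ B)
    (hg : Integrable g μ) :
    ∫ x in A, φ x * g x ∂μ = ∫ x in A, φ x * μ[g|m] x ∂μ := by
  have hφA' : StronglyMeasurable[m] (A.indicator φ) := hφ.indicator hA
  have hint : Integrable (A.indicator φ * g) μ := by
    have := (integrableOn_mul_of_abs_le (hm _ hA) (hφ.mono hm).aestronglyMeasurable hφA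
      hg).integrable_indicator (hm _ hA)
    exact this.congr (ae_of_all _ fun x => indicator_mul_left _ _ _)
  simp_rw [← integral_indicator (hm _ hA), indicator_mul_left]
  calc ∫ x, (A.indicator φ * g) x ∂μ = ∫ x, μ[A.indicator φ * g|m] x ∂μ :=
        (integral_condExp hm).symm
    _ = ∫ x, (A.indicator φ * μ[g|m]) x ∂μ :=
        integral_congr_ae (condExp_mul_of_stronglyMeasurable_left hφA' hint hg)

theorem setIntegral_rpow_mul_rpow_mul_condExp (hm : m ≤ m0) {s t g : Ω → ℝ} {A : Set Ω}
    {a b : ℝ} (hA : MeasurableSet[m] A) (ha : 0 < a) (hs : Measurable[m] s)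
    (ht : Measurable[m] t) (hsA : ∀ x ∈ A, s x ∈ Icc a b) (htA : ∀ x ∈ A, t x ∈ Icc a b)
    (hg : Integrable g μ) (r₁ r₂ : ℝ) :
    ∫ x in A, s x ^ r₁ * t x ^ r₂ * g x ∂μ = ∫ x in A, s x ^ r₁ * t x ^ r₂ * μ[g|m] x ∂μ :=
  setIntegral_mul_condExp hm hA ((hs.pow_const r₁).mul (ht.pow_const r₂)).stronglyMeasurable
    (fun x hx => abs_rpow_mul_rpow_le_of_mem_Icc ha (hsA x hx) (htA x hx) r₁ r₂) hg

theorem setIntegral_rpow_mul_rpow_le_condExp (hm : m ≤ m0) {f g : Ω → ℝ} (hf : 0 ≤ᵐ[μ] f)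
    (hg : 0 ≤ᵐ[μ] g) (hfi : Integrable f μ) (hgi : Integrable g μ) {θ₁ θ₂ : ℝ} (hθ₁ : 0 ≤ θ₁)
    (hθ₂ : 0 ≤ θ₂) (hθ : θ₁ + θ₂ = 1) {A : Set Ω} {a b : ℝ} (hA : MeasurableSet[m] A)
    (ha : 0 < a) (hfA : ∀ x ∈ A, μ[f|m] x ∈ Icc a b) (hgA : ∀ x ∈ A, μ[g|m] x ∈ Icc a b) :
    ∫ x in A, f x ^ θ₁ * g x ^ θ₂ ∂μ ≤ ∫ x in A, μ[f|m] x ^ θ₁ * μ[g|m] x ^ θ₂ ∂μ := by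
  set s := μ[f|m]
  set t := μ[g|m]
  have hs : Measurable[m] s := stronglyMeasurable_condExp.measurable
  have ht : Measurable[m] t := stronglyMeasurable_condExp.measurable
  have hA₀ : MeasurableSet A := hm _ hA
  have hs_mul : ∫ x in A, s x ^ (θ₁ - 1) * t x ^ θ₂ * s x ∂μ
      = ∫ x in A, s x ^ θ₁ * t x ^ θ₂ ∂μ := setIntegral_congr_fun hA₀ fun x hx => by
    have hsx := ha.trans_le (hfA x hx).1
    rw [Real.rpow_sub_one hsx.ne']
    field_simp
  have ht_mul : ∫ x in A, s x ^ θ₁ * t x ^ (θ₂ - 1) * t x ∂μ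
      = ∫ x in A, s x ^ θ₁ * t x ^ θ₂ ∂μ := setIntegral_congr_fun hA₀ fun x hx => by
    have htx := ha.trans_le (hgA x hx).1
    rw [Real.rpow_sub_one htx.ne']
    field_simp
  calc ∫ x in A, f x ^ θ₁ * g x ^ θ₂ ∂μ
      ≤ θ₁ * ∫ x in A, s x ^ (θ₁ - 1) * t x ^ θ₂ * f x ∂μ
          + θ₂ * ∫ x in A, s x ^ θ₁ * t x ^ (θ₂ - 1) * g x ∂μ :=
        setIntegral_rpow_mul_rpow_le_tangent hA₀ hf hg hfi hgi hθ₁ hθ₂ hθ ha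
          integrable_condExp.aemeasurable integrable_condExp.aemeasurable hfA hgA
    _ = ∫ x in A, s x ^ θ₁ * t x ^ θ₂ ∂μ := by
        rw [setIntegral_rpow_mul_rpow_mul_condExp hm hA ha hs ht hfA hgA hfi,
          setIntegral_rpow_mul_rpow_mul_condExp hm hA ha hs ht hfA hgA hgi, hs_mul, ht_mul,
          ← add_mul, hθ, one_mul]

theorem measure_eq_zero_of_forall_lt (hm : m ≤ m0) {σ₁ σ₂ v : Ω → ℝ} (hσ₁ : 0 ≤ᵐ[μ] σ₁)
    (hσ₂ : 0 ≤ᵐ[μ] σ₂) (hσ₁i : Integrable σ₁ μ) (hσ₂i : Integrable σ₂ μ) (hvi : Integrable v μ)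
    {θ₁ θ₂ p K : ℝ} (hθ₁ : 0 ≤ θ₁) (hθ₂ : 0 ≤ θ₂) (hθ : θ₁ + θ₂ = 1) (hK : 0 ≤ K)
    {A : Set Ω} {a b : ℝ} (hA : MeasurableSet[m] A) (ha : 0 < a)
    (hσ₁A : ∀ x ∈ A, μ[σ₁|m] x ∈ Icc a b) (hσ₂A : ∀ x ∈ A, μ[σ₂|m] x ∈ Icc a b)
    (htest : ∫ x in A, |μ[σ₁|m] x * μ[σ₂|m] x| ^ p * v x ∂μ
      ≤ K * ∫ x in A, σ₁ x ^ θ₁ * σ₂ x ^ θ₂ ∂μ)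
    (hlt : ∀ x ∈ A, K + 1 < μ[v|m] x * μ[σ₁|m] x ^ (p - θ₁) * μ[σ₂|m] x ^ (p - θ₂)) :
    μ A = 0 := by
  set s₁ := μ[σ₁|m]
  set s₂ := μ[σ₂|m]
  have hs₁ : Measurable[m] s₁ := stronglyMeasurable_condExp.measurable
  have hs₂ : Measurable[m] s₂ := stronglyMeasurable_condExp.measurable
  have hA₀ : MeasurableSet A := hm _ hA
  have hs₁pos x (hx : x ∈ A) : 0 < s₁ x := ha.trans_le (hσ₁A x hx).1
  have hs₂pos x (hx : x ∈ A) : 0 < s₂ x := ha.trans_le (hσ₂A x hx).1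
  have hsθ_pos x (hx : x ∈ A) : 0 < s₁ x ^ θ₁ * s₂ x ^ θ₂ :=
    mul_pos (Real.rpow_pos_of_pos (hs₁pos x hx) _) (Real.rpow_pos_of_pos (hs₂pos x hx) _)
  have hIi : IntegrableOn (fun x => s₁ x ^ θ₁ * s₂ x ^ θ₂) A μ := by
    simpa using integrableOn_rpow_mul_rpow_mul hA₀ ha integrable_condExp.aemeasurable
      integrable_condExp.aemeasurable hσ₁A hσ₂A (integrable_const 1) θ₁ θ₂
  have hG x (hx : x ∈ A) : (K + 1) * (s₁ x ^ θ₁ * s₂ x ^ θ₂) ≤ s₁ x ^ p * s₂ x ^ p * μ[v|m] x :=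
    calc (K + 1) * (s₁ x ^ θ₁ * s₂ x ^ θ₂)
        ≤ μ[v|m] x * s₁ x ^ (p - θ₁) * s₂ x ^ (p - θ₂) * (s₁ x ^ θ₁ * s₂ x ^ θ₂) :=
          mul_le_mul_of_nonneg_right (hlt x hx).le (hsθ_pos x hx).le
      _ = s₁ x ^ p * s₂ x ^ p * μ[v|m] x := by
          have h₁ := Real.rpow_pos_of_pos (hs₁pos x hx) θ₁
          have h₂ := Real.rpow_pos_of_pos (hs₂pos x hx) θ₂
          rw [Real.rpow_sub (hs₁pos x hx), Real.rpow_sub (hs₂pos x hx)]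
          field_simp
  have habs : ∫ x in A, |s₁ x * s₂ x| ^ p * v x ∂μ = ∫ x in A, s₁ x ^ p * s₂ x ^ p * v x ∂μ :=
    setIntegral_congr_fun hA₀ fun x hx => by
      rw [abs_of_pos (mul_pos (hs₁pos x hx) (hs₂pos x hx)),
        Real.mul_rpow (hs₁pos x hx).le (hs₂pos x hx).le]
  set I := ∫ x in A, s₁ x ^ θ₁ * s₂ x ^ θ₂ ∂μ
  have hI_le : (K + 1) * I ≤ K * I := calc
    (K + 1) * I = ∫ x in A, (K + 1) * (s₁ x ^ θ₁ * s₂ x ^ θ₂) ∂μ := (integral_const_mul _ _).symm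
    _ ≤ ∫ x in A, s₁ x ^ p * s₂ x ^ p * μ[v|m] x ∂μ :=
        setIntegral_mono_on (hIi.const_mul _) (integrableOn_rpow_mul_rpow_mul hA₀ ha
          integrable_condExp.aemeasurable integrable_condExp.aemeasurable hσ₁A hσ₂A
          integrable_condExp p p) hA₀ hG
    _ = ∫ x in A, |s₁ x * s₂ x| ^ p * v x ∂μ := by
        rw [habs, setIntegral_rpow_mul_rpow_mul_condExp hm hA ha hs₁ hs₂ hσ₁A hσ₂A hvi]
    _ ≤ K * ∫ x in A, σ₁ x ^ θ₁ * σ₂ x ^ θ₂ ∂μ := htest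
    _ ≤ K * I := by
        gcongr
        exact setIntegral_rpow_mul_rpow_le_condExp hm hσ₁ hσ₂ hσ₁i hσ₂i hθ₁ hθ₂ hθ hA ha hσ₁A hσ₂A
  by_contra hA_pos
  have hI_pos :=
    setIntegral_pos_of_ae_pos ((ae_restrict_iff' hA₀).2 (ae_of_all _ hsθ_pos)) hIi hA_pos
  linarith

theorem ae_condExp_mul_rpow_mul_rpow_le (hm : m ≤ m0) {σ₁ σ₂ v : Ω → ℝ}
    (hσ₁ : ∀ᵐ x ∂μ, 0 < σ₁ x) (hσ₂ : ∀ᵐ x ∂μ, 0 < σ₂ x) (hσ₁i : Integrable σ₁ μ)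
    (hσ₂i : Integrable σ₂ μ) (hvi : Integrable v μ) {θ₁ θ₂ p K : ℝ} (hθ₁ : 0 ≤ θ₁)
    (hθ₂ : 0 ≤ θ₂) (hθ : θ₁ + θ₂ = 1) (hK : 0 ≤ K)
    (htest : ∀ A, MeasurableSet[m] A → ∫ x in A, |μ[σ₁|m] x * μ[σ₂|m] x| ^ p * v x ∂μ
      ≤ K * ∫ x in A, σ₁ x ^ θ₁ * σ₂ x ^ θ₂ ∂μ) :
    ∀ᵐ x ∂μ, μ[v|m] x * μ[σ₁|m] x ^ (p - θ₁) * μ[σ₂|m] x ^ (p - θ₂) ≤ K + 1 := by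
  set G := fun x => μ[v|m] x * μ[σ₁|m] x ^ (p - θ₁) * μ[σ₂|m] x ^ (p - θ₂)
  have hs₁ : Measurable[m] μ[σ₁|m] := stronglyMeasurable_condExp.measurable
  have hs₂ : Measurable[m] μ[σ₂|m] := stronglyMeasurable_condExp.measurable
  have hGm : Measurable[m] G := (stronglyMeasurable_condExp.measurable.mul
    (hs₁.pow_const _)).mul (hs₂.pow_const _)
  set A : ℕ → Set Ω := fun M => {x | K + 1 < G x}
    ∩ μ[σ₁|m] ⁻¹' Icc ((M : ℝ) + 1)⁻¹ ((M : ℝ) + 1) ∩ μ[σ₂|m] ⁻¹' Icc ((M : ℝ) + 1)⁻¹ ((M : ℝ) + 1)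
  have hAm M : MeasurableSet[m] (A M) :=
    ((measurableSet_lt measurable_const hGm).inter (hs₁ measurableSet_Icc)).inter
      (hs₂ measurableSet_Icc)
  have hA M : μ (A M) = 0 :=
    measure_eq_zero_of_forall_lt hm (hσ₁.mono fun x hx => hx.le) (hσ₂.mono fun x hx => hx.le)
      hσ₁i hσ₂i hvi hθ₁ hθ₂ hθ hK (hAm M) (by positivity) (fun x hx => hx.1.2) (fun x hx => hx.2)
      (htest _ (hAm M)) fun x hx => hx.1.1
  filter_upwards [condExp_pos hm hσ₁ hσ₁i, condExp_pos hm hσ₂ hσ₂i,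
    measure_eq_zero_iff_ae_notMem.1 (measure_iUnion_null_iff.2 hA)] with x hs₁x hs₂x hx
  by_contra! hlt
  obtain ⟨M, hM₁, hM₂⟩ := ((eventually_mem_Icc_inv_natCast_add_one hs₁x).and
    (eventually_mem_Icc_inv_natCast_add_one hs₂x)).exists
  exact hx (mem_iUnion.2 ⟨M, ⟨hlt, hM₁⟩, hM₂⟩)

end ConditionalExpectation

theorem abs_indicator_rpow_mul_eq_indicator {Ω : Type*} {σ ω : Ω → ℝ} {q : ℝ} (hq : q ≠ 0)
    (h : ∀ x, |σ x| ^ q * ω x = σ x) (A : Set Ω) :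
    (fun x => |A.indicator σ x| ^ q * ω x) = A.indicator σ := by
  funext x
  by_cases hx : x ∈ A <;> simp [hx, h, Real.zero_rpow hq]

section StoppingTime

variable {Ω : Type*} {m0 : MeasurableSpace Ω}

open scoped Classical in
noncomputable def stopOn (n : ℕ) (A : Set Ω) : Ω → ℕ∞ := A.piecewise (fun _ => n) fun _ => ⊤

theorem stopOn_of_mem {n : ℕ} {A : Set Ω} {x : Ω} (hx : x ∈ A) : stopOn n A x = n := by
  simp [stopOn, hx]

theorem setOf_stopOn_ne_top (n : ℕ) (A : Set Ω) : {x | stopOn n A x ≠ ⊤} = A := by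
  ext x
  by_cases hx : x ∈ A <;> simp [stopOn, hx]

theorem measurableSet_stopOn_le (ℱ : Filtration ℕ m0) {n : ℕ} {A : Set Ω}
    (hA : MeasurableSet[ℱ n] A) (k : ℕ) : MeasurableSet[ℱ k] {x | stopOn n A x ≤ k} := by
  by_cases hnk : n ≤ k
  · convert ℱ.mono hnk _ hA using 1
    ext x
    by_cases hx : x ∈ A <;> simp [stopOn, hx, hnk]
  · convert @MeasurableSet.empty _ (ℱ k)
    ext x
    by_cases hx : x ∈ A <;> simp [stopOn, hx, hnk]

theorem setIntegral_stopOn_condExp {μ : Measure Ω} [IsFiniteMeasure μ] (ℱ : Filtration ℕ m0)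
    {n : ℕ} {A : Set Ω} (hA : MeasurableSet[ℱ n] A) {f g : Ω → ℝ} (hf : Integrable f μ)
    (hg : Integrable g μ) (v : Ω → ℝ) (p : ℝ) :
    ∫ x in {x | stopOn n A x ≠ ⊤}, |μ[A.indicator f|ℱ (stopOn n A x).toNat] x
        * μ[A.indicator g|ℱ (stopOn n A x).toNat] x| ^ p * v x ∂μ
      = ∫ x in A, |μ[f|ℱ n] x * μ[g|ℱ n] x| ^ p * v x ∂μ := by
  rw [setOf_stopOn_ne_top]
  refine setIntegral_congr_ae (ℱ.le n _ hA) ?_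
  filter_upwards [condExp_indicator hf hA, condExp_indicator hg hA] with x hfx hgx hx
  rw [stopOn_of_mem hx, ENat.toNat_natCast, hfx, hgx, indicator_of_mem hx, indicator_of_mem hx]

theorem setIntegral_condExp_mul_rpow_le_of_stopOn {μ : Measure Ω} [IsFiniteMeasure μ]
    (ℱ : Filtration ℕ m0) {n : ℕ} {A : Set Ω} (hA : MeasurableSet[ℱ n] A)
    {σ₁ σ₂ ω₁ ω₂ v : Ω → ℝ} {p p₁ p₂ C : ℝ} (hp : 0 < p) (hp₁ : p₁ ≠ 0) (hp₂ : p₂ ≠ 0)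
    (hC : 0 ≤ C) (hσ₁ : ∀ x, 0 ≤ σ₁ x) (hσ₂ : ∀ x, 0 ≤ σ₂ x) (hσ₁i : Integrable σ₁ μ)
    (hσ₂i : Integrable σ₂ μ) (hv : ∀ x, 0 ≤ v x) (hσ₁ω : ∀ x, |σ₁ x| ^ p₁ * ω₁ x = σ₁ x)
    (hσ₂ω : ∀ x, |σ₂ x| ^ p₂ * ω₂ x = σ₂ x)
    (hstop : (∫ x in {x | stopOn n A x ≠ ⊤}, |μ[A.indicator σ₁|ℱ (stopOn n A x).toNat] x
        * μ[A.indicator σ₂|ℱ (stopOn n A x).toNat] x| ^ p * v x ∂μ) ^ (1 / p)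
      ≤ C * (∫ x, |A.indicator σ₁ x| ^ p₁ * ω₁ x ∂μ) ^ (1 / p₁)
        * (∫ x, |A.indicator σ₂ x| ^ p₂ * ω₂ x ∂μ) ^ (1 / p₂)) :
    ∫ x in A, |μ[σ₁|ℱ n] x * μ[σ₂|ℱ n] x| ^ p * v x ∂μ
      ≤ C ^ p * ((∫ x in A, σ₁ x ∂μ) ^ (p / p₁) * (∫ x in A, σ₂ x ∂μ) ^ (p / p₂)) := by
  have hA₀ := ℱ.le n _ hA
  have hR₁ : 0 ≤ ∫ x in A, σ₁ x ∂μ := setIntegral_nonneg hA₀ fun x _ => hσ₁ x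
  have hR₂ : 0 ≤ ∫ x in A, σ₂ x ∂μ := setIntegral_nonneg hA₀ fun x _ => hσ₂ x
  rw [setIntegral_stopOn_condExp ℱ hA hσ₁i hσ₂i, abs_indicator_rpow_mul_eq_indicator hp₁ hσ₁ω,
    abs_indicator_rpow_mul_eq_indicator hp₂ hσ₂ω, integral_indicator hA₀, integral_indicator hA₀,
    one_div p, Real.rpow_inv_le_iff_of_pos (setIntegral_nonneg hA₀ fun x _ => by
      have := hv x; positivity) (by positivity) hp] at hstop
  refine hstop.trans_eq ?_
  rw [Real.mul_rpow (by positivity) (by positivity), Real.mul_rpow hC (by positivity),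
    ← Real.rpow_mul hR₁, ← Real.rpow_mul hR₂]
  ring_nf

end StoppingTime

theorem stmt_4_general
    {Ω : Type*} {m0 : MeasurableSpace Ω} {μ : Measure Ω} [IsProbabilityMeasure μ]
    (ℱ : Filtration ℕ m0)
    (v ω₁ ω₂ : Ω → ℝ)
    (hv : ∀ x, 0 < v x) (hω₁ : ∀ x, 0 < ω₁ x) (hω₂ : ∀ x, 0 < ω₂ x)
    (hvI : Integrable v μ)
    (p p₁ p₂ C : ℝ) (hp₁ : 1 < p₁) (hp₂ : 1 < p₂)
    (hp : 1 / p = 1 / p₁ + 1 / p₂) (hC : 0 < C)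
    (hσ₁I : Integrable (fun x => ω₁ x ^ (-(1 / (p₁ - 1)))) μ)
    (hσ₂I : Integrable (fun x => ω₂ x ^ (-(1 / (p₂ - 1)))) μ)
    (hRH : ∀ τ : Ω → ℕ∞, (∀ n : ℕ, MeasurableSet[ℱ n] {x | τ x ≤ (n : ℕ∞)}) →
      (∫ x in {x | τ x ≠ ⊤}, ω₁ x ^ (-(1 / (p₁ - 1))) ∂μ) ^ (p / p₁)
          * (∫ x in {x | τ x ≠ ⊤}, ω₂ x ^ (-(1 / (p₂ - 1))) ∂μ) ^ (p / p₂)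
        ≤ C * ∫ x in {x | τ x ≠ ⊤},
            (ω₁ x ^ (-(1 / (p₁ - 1)))) ^ (p / p₁) * (ω₂ x ^ (-(1 / (p₂ - 1)))) ^ (p / p₂) ∂μ)
    (H : ∀ τ : Ω → ℕ∞, (∀ n : ℕ, MeasurableSet[ℱ n] {x | τ x ≤ (n : ℕ∞)}) →
      ∀ f g : Ω → ℝ, Integrable f μ →
        Integrable (fun x => |f x| ^ p₁ * ω₁ x) μ →
        Integrable g μ →
        Integrable (fun x => |g x| ^ p₂ * ω₂ x) μ →
        (∫ x in {x | τ x ≠ ⊤},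
            |(μ[f|ℱ (τ x).toNat]) x * (μ[g|ℱ (τ x).toNat]) x| ^ p * v x ∂μ) ^ (1 / p)
          ≤ C * (∫ x, |f x| ^ p₁ * ω₁ x ∂μ) ^ (1 / p₁)
              * (∫ x, |g x| ^ p₂ * ω₂ x ∂μ) ^ (1 / p₂)) :
    ∃ C' : ℝ, 0 < C' ∧ ∀ n : ℕ, ∀ᵐ x ∂μ,
      (μ[v|ℱ n]) x ^ (1 / p)
        * (μ[fun y => ω₁ y ^ (-(1 / (p₁ - 1)))|ℱ n]) x ^ ((p₁ - 1) / p₁)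
        * (μ[fun y => ω₂ y ^ (-(1 / (p₂ - 1)))|ℱ n]) x ^ ((p₂ - 1) / p₂) ≤ C' := by
  have hp₀ : 0 < p := one_div_pos.1 (hp ▸ by positivity)
  have hp₁₀ : p₁ ≠ 0 := (zero_lt_one.trans hp₁).ne'
  have hp₂₀ : p₂ ≠ 0 := (zero_lt_one.trans hp₂).ne'
  have hθ : p / p₁ + p / p₂ = 1 := by
    rw [div_eq_mul_one_div p, div_eq_mul_one_div p, ← mul_add, ← hp, mul_one_div_cancel hp₀.ne']
  set σ₁ := fun x => ω₁ x ^ (-(1 / (p₁ - 1)))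
  set σ₂ := fun x => ω₂ x ^ (-(1 / (p₂ - 1)))
  have hσ₁pos x : 0 < σ₁ x := Real.rpow_pos_of_pos (hω₁ x) _
  have hσ₂pos x : 0 < σ₂ x := Real.rpow_pos_of_pos (hω₂ x) _
  have hσ₁ω x := abs_rpow_neg_one_div_sub_one_rpow_mul_self (hω₁ x) hp₁.ne'
  have hσ₂ω x := abs_rpow_neg_one_div_sub_one_rpow_mul_self (hω₂ x) hp₂.ne'
  refine ⟨(C ^ p * C + 1) ^ (1 / p), by positivity, fun n => ?_⟩
  have htest A (hA : MeasurableSet[ℱ n] A) : ∫ x in A, |μ[σ₁|ℱ n] x * μ[σ₂|ℱ n] x| ^ p * v x ∂μ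
      ≤ C ^ p * C * ∫ x in A, σ₁ x ^ (p / p₁) * σ₂ x ^ (p / p₂) ∂μ := by
    have hA₀ := ℱ.le n _ hA
    have hτ := measurableSet_stopOn_le ℱ hA
    have hRHA := hRH _ hτ
    rw [setOf_stopOn_ne_top] at hRHA
    calc _ ≤ C ^ p * ((∫ x in A, σ₁ x ∂μ) ^ (p / p₁) * (∫ x in A, σ₂ x ∂μ) ^ (p / p₂)) :=
          setIntegral_condExp_mul_rpow_le_of_stopOn ℱ hA hp₀ hp₁₀ hp₂₀ hC.le
            (fun x => (hσ₁pos x).le) (fun x => (hσ₂pos x).le) hσ₁I hσ₂I (fun x => (hv x).le)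
            hσ₁ω hσ₂ω <| H _ hτ _ _ (hσ₁I.indicator hA₀)
              (by rw [abs_indicator_rpow_mul_eq_indicator hp₁₀ hσ₁ω]; exact hσ₁I.indicator hA₀)
              (hσ₂I.indicator hA₀)
              (by rw [abs_indicator_rpow_mul_eq_indicator hp₂₀ hσ₂ω]; exact hσ₂I.indicator hA₀)
      _ ≤ _ := by rw [mul_assoc]; gcongr
  filter_upwards [ae_condExp_mul_rpow_mul_rpow_le (ℱ.le n) (ae_of_all _ hσ₁pos)
      (ae_of_all _ hσ₂pos) hσ₁I hσ₂I hvI (by positivity) (by positivity) hθ (by positivity) htest,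
    condExp_nonneg (ae_of_all _ fun x => (hv x).le),
    condExp_nonneg (ae_of_all _ fun x => (hσ₁pos x).le),
    condExp_nonneg (ae_of_all _ fun x => (hσ₂pos x).le)] with x hG hw hs₁ hs₂
  exact mul_rpow_mul_rpow_le_rpow_one_div hw hs₁ hs₂ hp₀ hp₁₀ hp₂₀ hG

theorem stmt_4
    {Ω : Type*} {m0 : MeasurableSpace Ω} {μ : Measure Ω} [IsProbabilityMeasure μ]
    (ℱ : Filtration ℕ m0)
    (v ω₁ ω₂ : Ω → ℝ)
    (hv : ∀ x, 0 < v x) (hω₁ : ∀ x, 0 < ω₁ x) (hω₂ : ∀ x, 0 < ω₂ x)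
    (hvI : Integrable v μ) (hω₁I : Integrable ω₁ μ) (hω₂I : Integrable ω₂ μ)
    (p p₁ p₂ C : ℝ) (hp₁ : 1 < p₁) (hp₂ : 1 < p₂)
    (hp : 1 / p = 1 / p₁ + 1 / p₂) (hC : 0 < C)
    (hσ₁I : Integrable (fun x => ω₁ x ^ (-(1 / (p₁ - 1)))) μ)
    (hσ₂I : Integrable (fun x => ω₂ x ^ (-(1 / (p₂ - 1)))) μ)
    (hRH : ∀ τ : Ω → ℕ∞, (∀ n : ℕ, MeasurableSet[ℱ n] {x | τ x ≤ (n : ℕ∞)}) →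
      (∫ x in {x | τ x ≠ ⊤}, ω₁ x ^ (-(1 / (p₁ - 1))) ∂μ) ^ (p / p₁)
          * (∫ x in {x | τ x ≠ ⊤}, ω₂ x ^ (-(1 / (p₂ - 1))) ∂μ) ^ (p / p₂)
        ≤ C * ∫ x in {x | τ x ≠ ⊤},
            (ω₁ x ^ (-(1 / (p₁ - 1)))) ^ (p / p₁) * (ω₂ x ^ (-(1 / (p₂ - 1)))) ^ (p / p₂) ∂μ)
    (H : ∀ τ : Ω → ℕ∞, (∀ n : ℕ, MeasurableSet[ℱ n] {x | τ x ≤ (n : ℕ∞)}) →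
      ∀ f g : Ω → ℝ, Integrable f μ →
        Integrable (fun x => |f x| ^ p₁ * ω₁ x) μ →
        Integrable g μ →
        Integrable (fun x => |g x| ^ p₂ * ω₂ x) μ →
        (∫ x in {x | τ x ≠ ⊤},
            |(μ[f|ℱ (τ x).toNat]) x * (μ[g|ℱ (τ x).toNat]) x| ^ p * v x ∂μ) ^ (1 / p)
          ≤ C * (∫ x, |f x| ^ p₁ * ω₁ x ∂μ) ^ (1 / p₁)
              * (∫ x, |g x| ^ p₂ * ω₂ x ∂μ) ^ (1 / p₂)) :
    ∃ C' : ℝ, 0 < C' ∧ ∀ n : ℕ, ∀ᵐ x ∂μ,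
      (μ[v|ℱ n]) x ^ (1 / p)
        * (μ[fun y => ω₁ y ^ (-(1 / (p₁ - 1)))|ℱ n]) x ^ ((p₁ - 1) / p₁)
        * (μ[fun y => ω₂ y ^ (-(1 / (p₂ - 1)))|ℱ n]) x ^ ((p₂ - 1) / p₂) ≤ C' :=
  stmt_4_general ℱ v ω₁ ω₂ hv hω₁ hω₂ hvI p p₁ p₂ C hp₁ hp₂ hp hC hσ₁I hσ₂I hRH H
end

section
/- Let ω₁, ω₂ be weights, 1 < p₁, p₂ < ∞, 1/p = 1/p₁ + 1/p₂, σ_i = ω_i^{-1/(p_i-1)} ∈ L¹, and v = ω₁^{p/p₁} ω₂^{p/p₂}. Suppose f ∈ L^{p₁}(ω₁), g ∈ L^{p₂}(ω₂), and E_n(f)E_n(g) ∈ L^p(v) for all n. If for every ε > 0 there is a nonnegative y ∈ L^p(v) with sup_n (∫_Ω |E_n(f)E_n(g) χ_{{|E_n(f)E_n(g)| ≥ y}}|^p v dμ)^{1/p} ≤ ε, then ∫_Ω |E_n(f)E_n(g) - fg|^p v dμ → 0 as n → ∞. -/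
/-!
Write `U n = E_n f · E_n g`, which tends to `u = f g` a.e. by martingale convergence, and pass to
the measure `ν = v μ`. For a level `y` given by the hypothesis let `T t = max (-y) (min y t)` and
split `U n - u = (U n - T U n) + (T U n - T u) + (T u - u)`. The first piece is bounded by the
tail integral over `{y ≤ |U n|}`, the third by the same bound via Fatou's lemma, and the middle one
tends to zero by dominated convergence, being bounded by `2 y ∈ L^p(ν)`. As `p = p₁ p₂ / (p₁ + p₂)`
may be smaller than `1`, the pieces are recombined with `(a + b + c)^p ≤ 3^p (a^p + b^p + c^p)`
instead of Minkowski's inequality.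
-/

open MeasureTheory Filter ENNReal Topology

theorem ENNReal.add_add_rpow_le {p : ℝ} (hp : 0 ≤ p) (a b c : ℝ≥0∞) :
    (a + b + c) ^ p ≤ 3 ^ p * (a ^ p + b ^ p + c ^ p) := by
  set M := max a (max b c) with hM
  have hsum : a + b + c ≤ 3 * M := by
    have ha : a ≤ M := le_max_left _ _
    have hb : b ≤ M := (le_max_left _ _).trans (le_max_right _ _)
    have hc : c ≤ M := (le_max_right _ _).trans (le_max_right _ _)
    calc a + b + c ≤ M + M + M := by gcongr
      _ = 3 * M := by ring
  have hM : M ^ p ≤ a ^ p + b ^ p + c ^ p := by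
    rcases max_choice a (max b c) with h | h <;> rw [hM, h]
    · exact le_self_add.trans le_self_add
    · rcases max_choice b c with h' | h' <;> rw [h']
      · exact le_add_self.trans le_self_add
      · exact le_add_self
  calc (a + b + c) ^ p ≤ (3 * M) ^ p := rpow_le_rpow hsum hp
    _ = 3 ^ p * M ^ p := mul_rpow_of_nonneg _ _ hp
    _ ≤ 3 ^ p * (a ^ p + b ^ p + c ^ p) := by gcongr

def truncate (y t : ℝ) : ℝ := max (-y) (min y t)

theorem continuous_truncate (y : ℝ) : Continuous (truncate y) :=
  continuous_const.max (continuous_const.min continuous_id)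

theorem abs_truncate_le {y : ℝ} (hy : 0 ≤ y) (t : ℝ) : |truncate y t| ≤ y :=
  abs_le.2 ⟨le_max_left _ _, max_le (by linarith) (min_le_left _ _)⟩

theorem enorm_sub_truncate {y : ℝ} (hy : 0 ≤ y) (t : ℝ) :
    ‖t - truncate y t‖ₑ = ENNReal.ofReal (|t| - y) := by
  have h : |t - truncate y t| = max (|t| - y) 0 := by
    simp only [truncate, max_def, min_def, abs_eq_max_neg]
    split_ifs <;> linarith
  rw [Real.enorm_eq_ofReal_abs, h, ENNReal.ofReal_max, ENNReal.ofReal_zero, max_zero]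

theorem enorm_sub_rpow_le_truncate {p y : ℝ} (hp : 0 ≤ p) (hy : 0 ≤ y) (s t : ℝ) :
    ‖s - t‖ₑ ^ p ≤ 3 ^ p * (ENNReal.ofReal (|s| - y) ^ p
      + ‖truncate y s - truncate y t‖ₑ ^ p + ENNReal.ofReal (|t| - y) ^ p) := by
  refine le_trans (rpow_le_rpow ?_ hp) (ENNReal.add_add_rpow_le hp _ _ _)
  rw [← enorm_sub_truncate hy s, ← enorm_sub_truncate hy t, enorm_sub_rev t]
  calc ‖s - t‖ₑ = ‖(s - truncate y s) + (truncate y s - truncate y t) + (truncate y t - t)‖ₑ := by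
        ring_nf
    _ ≤ _ := enorm_add₃_le

section Vitali

variable {Ω : Type*} [MeasurableSpace Ω] {ν : Measure Ω} {p : ℝ}

theorem AEMeasurable.truncate {y w : Ω → ℝ} (hy : AEMeasurable y ν) (hw : AEMeasurable w ν) :
    AEMeasurable (fun x => truncate (y x) (w x)) ν :=
  hy.neg.max (hy.min hw)

theorem lintegral_ofReal_abs_sub_rpow_le_setLIntegral (hp : 0 < p) {y : Ω → ℝ}
    (hy : ∀ x, 0 ≤ y x) (w : Ω → ℝ) :
    ∫⁻ x, ENNReal.ofReal (|w x| - y x) ^ p ∂ν ≤ ∫⁻ x in {x | y x ≤ |w x|}, ‖w x‖ₑ ^ p ∂ν := by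
  refine (lintegral_mono fun x => ?_).trans (lintegral_indicator_le _ _)
  by_cases hx : y x ≤ |w x|
  · rw [Set.indicator_of_mem (s := {x | y x ≤ |w x|}) hx, Real.enorm_eq_ofReal_abs]
    gcongr
    linarith [hy x]
  · rw [ENNReal.ofReal_of_nonpos (by linarith), ENNReal.zero_rpow_of_pos hp]
    exact zero_le

theorem lintegral_ofReal_abs_sub_rpow_le_of_tendsto {U : ℕ → Ω → ℝ} {u y : Ω → ℝ}
    (hU : ∀ n, AEMeasurable (U n) ν) (hy : AEMeasurable y ν)
    (hlim : ∀ᵐ x ∂ν, Tendsto (U · x) atTop (𝓝 (u x))) {δ : ℝ≥0∞}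
    (hδ : ∀ n, ∫⁻ x, ENNReal.ofReal (|U n x| - y x) ^ p ∂ν ≤ δ) :
    ∫⁻ x, ENNReal.ofReal (|u x| - y x) ^ p ∂ν ≤ δ := by
  have hcont : Continuous fun (t : ℝ × ℝ) => ENNReal.ofReal (|t.1| - t.2) ^ p :=
    ENNReal.continuous_rpow_const.comp (ENNReal.continuous_ofReal.comp (by fun_prop))
  calc ∫⁻ x, ENNReal.ofReal (|u x| - y x) ^ p ∂ν
      = ∫⁻ x, liminf (fun n => ENNReal.ofReal (|U n x| - y x) ^ p) atTop ∂ν := by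
        refine lintegral_congr_ae ?_
        filter_upwards [hlim] with x hx
        exact ((hcont.tendsto _).comp (hx.prodMk_nhds tendsto_const_nhds)).liminf_eq.symm
    _ ≤ liminf (fun n => ∫⁻ x, ENNReal.ofReal (|U n x| - y x) ^ p ∂ν) atTop :=
        lintegral_liminf_le' fun n => (((hU n).abs.sub hy).ennreal_ofReal).pow_const p
    _ ≤ δ := liminf_le_of_frequently_le' (Frequently.of_forall hδ)

theorem tendsto_lintegral_enorm_truncate_sub_rpow (hp : 0 < p) {U : ℕ → Ω → ℝ} {u y : Ω → ℝ}
    (hU : ∀ n, AEMeasurable (U n) ν) (hu : AEMeasurable u ν) (hy : AEMeasurable y ν)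
    (hy0 : ∀ x, 0 ≤ y x) (hyp : ∫⁻ x, ‖y x‖ₑ ^ p ∂ν ≠ ∞)
    (hlim : ∀ᵐ x ∂ν, Tendsto (U · x) atTop (𝓝 (u x))) :
    Tendsto (fun n => ∫⁻ x, ‖truncate (y x) (U n x) - truncate (y x) (u x)‖ₑ ^ p ∂ν)
      atTop (𝓝 0) := by
  have hbound : ∀ n, ∀ x, ‖truncate (y x) (U n x) - truncate (y x) (u x)‖ₑ ^ p
      ≤ 2 ^ p * ‖y x‖ₑ ^ p := fun n x => by
    rw [← mul_rpow_of_nonneg _ _ hp.le]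
    gcongr
    calc ‖truncate (y x) (U n x) - truncate (y x) (u x)‖ₑ
        ≤ ‖truncate (y x) (U n x)‖ₑ + ‖truncate (y x) (u x)‖ₑ := enorm_sub_le
      _ ≤ ‖y x‖ₑ + ‖y x‖ₑ := by
        simp only [Real.enorm_eq_ofReal_abs, abs_of_nonneg (hy0 x)]
        gcongr <;> exact abs_truncate_le (hy0 x) _
      _ = 2 * ‖y x‖ₑ := by ring
  have hmeas : ∀ n, AEMeasurable
      (fun x => ‖truncate (y x) (U n x) - truncate (y x) (u x)‖ₑ ^ p) ν := fun n =>
    ((hy.truncate (hU n)).sub (hy.truncate hu)).enorm.pow_const p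
  have hfin : ∫⁻ x, 2 ^ p * ‖y x‖ₑ ^ p ∂ν ≠ ∞ := by
    rw [lintegral_const_mul' _ _ (by simp)]
    exact mul_ne_top (by simp) hyp
  have hpt : ∀ᵐ x ∂ν, Tendsto (fun n => ‖truncate (y x) (U n x) - truncate (y x) (u x)‖ₑ ^ p)
      atTop (𝓝 0) := by
    filter_upwards [hlim] with x hx
    have hcont : Continuous fun t => ‖truncate (y x) t - truncate (y x) (u x)‖ₑ ^ p :=
      ENNReal.continuous_rpow_const.comp
        (continuous_enorm.comp ((continuous_truncate _).sub continuous_const))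
    have h := (hcont.tendsto (u x)).comp hx
    rwa [sub_self, enorm_zero, ENNReal.zero_rpow_of_pos hp] at h
  simpa using tendsto_lintegral_of_dominated_convergence' _ hmeas
    (fun n => ae_of_all _ (hbound n)) hfin hpt

theorem tendsto_lintegral_enorm_sub_rpow_of_tendsto_ae (hp : 0 < p) {U : ℕ → Ω → ℝ} {u : Ω → ℝ}
    (hU : ∀ n, AEMeasurable (U n) ν) (hu : AEMeasurable u ν)
    (hlim : ∀ᵐ x ∂ν, Tendsto (U · x) atTop (𝓝 (u x)))
    (H : ∀ ε > 0, ∃ y : Ω → ℝ, (∀ x, 0 ≤ y x) ∧ AEMeasurable y ν ∧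
      ∫⁻ x, ‖y x‖ₑ ^ p ∂ν ≠ ∞ ∧ ∀ n, ∫⁻ x in {x | y x ≤ |U n x|}, ‖U n x‖ₑ ^ p ∂ν ≤ ε) :
    Tendsto (fun n => ∫⁻ x, ‖U n x - u x‖ₑ ^ p ∂ν) atTop (𝓝 0) := by
  rw [ENNReal.tendsto_atTop_zero]
  intro ε hε
  set δ := ε / (3 ^ p * 3)
  have hδ : 0 < δ := ENNReal.div_pos_iff.2 ⟨hε.ne', by finiteness⟩
  obtain ⟨y, hy0, hy, hyp, hyU⟩ := H δ hδ
  have htail : ∀ n, ∫⁻ x, ENNReal.ofReal (|U n x| - y x) ^ p ∂ν ≤ δ := fun n =>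
    (lintegral_ofReal_abs_sub_rpow_le_setLIntegral hp hy0 (U n)).trans (hyU n)
  obtain ⟨N, hN⟩ := eventually_atTop.1 <|
    (tendsto_lintegral_enorm_truncate_sub_rpow hp hU hu hy hy0 hyp hlim).eventually
      (gt_mem_nhds hδ)
  refine ⟨N, fun n hn => ?_⟩
  calc ∫⁻ x, ‖U n x - u x‖ₑ ^ p ∂ν
      ≤ ∫⁻ x, 3 ^ p * (ENNReal.ofReal (|U n x| - y x) ^ p
          + ‖truncate (y x) (U n x) - truncate (y x) (u x)‖ₑ ^ p
          + ENNReal.ofReal (|u x| - y x) ^ p) ∂ν :=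
        lintegral_mono fun x => enorm_sub_rpow_le_truncate hp.le (hy0 x) _ _
    _ = 3 ^ p * (∫⁻ x, ENNReal.ofReal (|U n x| - y x) ^ p ∂ν
          + ∫⁻ x, ‖truncate (y x) (U n x) - truncate (y x) (u x)‖ₑ ^ p ∂ν
          + ∫⁻ x, ENNReal.ofReal (|u x| - y x) ^ p ∂ν) := by
        rw [lintegral_const_mul' _ _ (by simp), lintegral_add_right', lintegral_add_right']
        · exact ((hy.truncate (hU n)).sub (hy.truncate hu)).enorm.pow_const p
        · exact ((hu.abs.sub hy).ennreal_ofReal).pow_const p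
    _ ≤ 3 ^ p * (δ + δ + δ) := by
        gcongr
        · exact htail n
        · exact (hN n hn).le
        · exact lintegral_ofReal_abs_sub_rpow_le_of_tendsto hU hy hlim htail
    _ = 3 ^ p * 3 * δ := by ring
    _ ≤ ε := ENNReal.mul_div_le

end Vitali

section Weighted

variable {Ω : Type*} [MeasurableSpace Ω] {μ : Measure Ω} {p : ℝ}

theorem lintegral_enorm_rpow_withDensity_ofReal {v : Ω → ℝ} (hv : AEMeasurable v μ)
    (hp : 0 ≤ p) (w : Ω → ℝ) :
    ∫⁻ x, ‖w x‖ₑ ^ p ∂μ.withDensity (fun x => ENNReal.ofReal (v x))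
      = ∫⁻ x, ENNReal.ofReal (|w x| ^ p * v x) ∂μ := by
  rw [lintegral_withDensity_eq_lintegral_mul_non_measurable₀ _ hv.ennreal_ofReal
    (ae_of_all _ fun _ => ofReal_lt_top)]
  refine lintegral_congr fun x => ?_
  rw [Pi.mul_apply, mul_comm, ENNReal.ofReal_mul (by positivity), Real.enorm_eq_ofReal_abs,
    ENNReal.ofReal_rpow_of_nonneg (abs_nonneg _) hp]

theorem aemeasurable_of_aemeasurable_rpow_mul (hp : p ≠ 0) {y v : Ω → ℝ} (hy : ∀ x, 0 ≤ y x)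
    (hv : AEMeasurable v μ) (hv0 : ∀ x, v x ≠ 0)
    (h : AEMeasurable (fun x => y x ^ p * v x) μ) : AEMeasurable y μ :=
  ((h.div hv).pow_const p⁻¹).congr <| ae_of_all _ fun x => by
    simp only [Pi.div_apply, mul_div_cancel_right₀ _ (hv0 x), Real.rpow_rpow_inv (hy x) hp]

theorem tendsto_integral_rpow_abs_sub_mul_of_tendsto_ae [SFinite μ] (hp : 0 < p)
    {U : ℕ → Ω → ℝ} {u v : Ω → ℝ} (hv : AEMeasurable v μ) (hv0 : ∀ x, 0 < v x)
    (hU : ∀ n, AEMeasurable (U n) μ) (hu : AEMeasurable u μ)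
    (hUI : ∀ n, Integrable (fun x => |U n x| ^ p * v x) μ)
    (hlim : ∀ᵐ x ∂μ, Tendsto (U · x) atTop (𝓝 (u x)))
    (H : ∀ ε : ℝ, 0 < ε → ∃ y : Ω → ℝ, (∀ x, 0 ≤ y x) ∧
      Integrable (fun x => y x ^ p * v x) μ ∧
      ∀ n, (∫ x in {x | y x ≤ |U n x|}, |U n x| ^ p * v x ∂μ) ^ (1 / p) ≤ ε) :
    Tendsto (fun n => ∫ x, |U n x - u x| ^ p * v x ∂μ) atTop (𝓝 0) := by
  set ν := μ.withDensity fun x => ENNReal.ofReal (v x)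
  have hνμ : ν ≪ μ := withDensity_absolutelyContinuous _ _
  have hweight : ∀ t x, 0 ≤ |t| ^ p * v x := fun t x => mul_nonneg (by positivity) (hv0 x).le
  have hνH : ∀ ε > 0, ∃ y : Ω → ℝ, (∀ x, 0 ≤ y x) ∧ AEMeasurable y ν ∧
      ∫⁻ x, ‖y x‖ₑ ^ p ∂ν ≠ ∞ ∧ ∀ n, ∫⁻ x in {x | y x ≤ |U n x|}, ‖U n x‖ₑ ^ p ∂ν ≤ ε := by
    intro ε hε
    obtain ⟨r, -, hr0, hrε⟩ := ENNReal.lt_iff_exists_real_btwn.1 hε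
    have hr : 0 < r := ENNReal.ofReal_pos.1 hr0
    obtain ⟨y, hy0, hyI, hyU⟩ := H (r ^ p⁻¹) (by positivity)
    refine ⟨y, hy0, ?_, ?_, fun n => ?_⟩
    · exact (aemeasurable_of_aemeasurable_rpow_mul hp.ne' hy0 hv (fun x => (hv0 x).ne')
        hyI.1.aemeasurable).mono_ac hνμ
    · rw [lintegral_enorm_rpow_withDensity_ofReal hv hp.le]
      simpa only [abs_of_nonneg (hy0 _)] using hyI.lintegral_lt_top.ne
    · rw [restrict_withDensity', lintegral_enorm_rpow_withDensity_ofReal hv.restrict hp.le,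
        ← ofReal_integral_eq_lintegral_ofReal (hUI n).restrict (ae_of_all _ fun x => hweight _ x)]
      refine (ENNReal.ofReal_le_ofReal ?_).trans hrε.le
      have h := hyU n
      rwa [one_div, Real.rpow_inv_le_iff_of_pos (integral_nonneg fun x => hweight _ x)
        (by positivity) hp, Real.rpow_inv_rpow hr.le hp.ne'] at h
  have hrepr : ∀ n, ∫ x, |U n x - u x| ^ p * v x ∂μ = (∫⁻ x, ‖U n x - u x‖ₑ ^ p ∂ν).toReal := by
    intro n
    rw [lintegral_enorm_rpow_withDensity_ofReal hv hp.le]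
    refine integral_eq_lintegral_of_nonneg_ae (ae_of_all _ fun x => hweight _ x) ?_
    exact ((((hU n).sub hu).abs.pow_const p).mul hv).aestronglyMeasurable
  simpa only [hrepr, ENNReal.toReal_zero, Function.comp_def] using
    (ENNReal.tendsto_toReal zero_ne_top).comp
    (tendsto_lintegral_enorm_sub_rpow_of_tendsto_ae hp (fun n => (hU n).mono_ac hνμ)
      (hu.mono_ac hνμ) (hνμ.ae_le hlim) hνH)

end Weighted

theorem MeasureTheory.Integrable.tendsto_ae_condExp_of_eq_iSup {Ω : Type*}
    {m0 : MeasurableSpace Ω} {μ : Measure Ω} [IsFiniteMeasure μ] {ℱ : Filtration ℕ m0}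
    (hgen : m0 = ⨆ n, ℱ n) {g : Ω → ℝ} (hg : Integrable g μ) :
    ∀ᵐ x ∂μ, Tendsto (fun n => μ[g|ℱ n] x) atTop (𝓝 (g x)) := by
  have hmk : StronglyMeasurable[⨆ n, ℱ n] (hg.1.mk g) := hgen ▸ hg.1.stronglyMeasurable_mk
  filter_upwards [(hg.congr hg.1.ae_eq_mk).tendsto_ae_condExp hmk, hg.1.ae_eq_mk,
    ae_all_iff.2 fun n => condExp_congr_ae (m := ℱ n) hg.1.ae_eq_mk] with x hx hgx hcond
  simpa only [hcond, hgx] using hx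

theorem stmt_11_general
    {Ω : Type*} {m0 : MeasurableSpace Ω} {μ : Measure Ω} [IsProbabilityMeasure μ]
    (ℱ : Filtration ℕ m0) (hgen : m0 = ⨆ n, ℱ n)
    (ω₁ ω₂ v : Ω → ℝ)
    (hω₁ : ∀ x, 0 < ω₁ x) (hω₂ : ∀ x, 0 < ω₂ x)
    (hω₁I : Integrable ω₁ μ) (hω₂I : Integrable ω₂ μ)
    (p p₁ p₂ : ℝ) (hp₁ : 1 < p₁) (hp₂ : 1 < p₂)
    (hp : 1 / p = 1 / p₁ + 1 / p₂)
    (hvdef : v = fun x => ω₁ x ^ (p / p₁) * ω₂ x ^ (p / p₂))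
    (f g : Ω → ℝ)
    (hfI : Integrable f μ)
    (hgI : Integrable g μ)
    (hfg : ∀ n : ℕ, Integrable (fun x => |(μ[f|ℱ n]) x * (μ[g|ℱ n]) x| ^ p * v x) μ)
    (H : ∀ ε : ℝ, 0 < ε → ∃ y : Ω → ℝ, (∀ x, 0 ≤ y x) ∧
      Integrable (fun x => y x ^ p * v x) μ ∧
      ∀ n : ℕ,
        (∫ x in {x | y x ≤ |(μ[f|ℱ n]) x * (μ[g|ℱ n]) x|},
            |(μ[f|ℱ n]) x * (μ[g|ℱ n]) x| ^ p * v x ∂μ) ^ (1 / p) ≤ ε) :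
    Tendsto (fun n : ℕ => ∫ x, |(μ[f|ℱ n]) x * (μ[g|ℱ n]) x - f x * g x| ^ p * v x ∂μ)
      atTop (nhds 0) := by
  have hp0 : 0 < p := by
    have : 0 < 1 / p₁ + 1 / p₂ := by positivity
    rwa [← hp, one_div_pos] at this
  have hv0 : ∀ x, 0 < v x := fun x => by
    rw [hvdef]
    exact mul_pos (Real.rpow_pos_of_pos (hω₁ x) _) (Real.rpow_pos_of_pos (hω₂ x) _)
  have hv : AEMeasurable v μ := by
    rw [hvdef]
    exact (hω₁I.1.aemeasurable.pow_const _).mul (hω₂I.1.aemeasurable.pow_const _)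
  have hlim : ∀ᵐ x ∂μ, Tendsto (fun n => (μ[f|ℱ n]) x * (μ[g|ℱ n]) x) atTop (𝓝 (f x * g x)) := by
    filter_upwards [hfI.tendsto_ae_condExp_of_eq_iSup hgen,
      hgI.tendsto_ae_condExp_of_eq_iSup hgen] with x hfx hgx
    exact hfx.mul hgx
  exact tendsto_integral_rpow_abs_sub_mul_of_tendsto_ae hp0 hv hv0
    (fun n => integrable_condExp.1.aemeasurable.mul integrable_condExp.1.aemeasurable)
    (hfI.1.aemeasurable.mul hgI.1.aemeasurable) hfg hlim H

theorem stmt_11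
    {Ω : Type*} {m0 : MeasurableSpace Ω} {μ : Measure Ω} [IsProbabilityMeasure μ]
    (ℱ : Filtration ℕ m0) (hgen : m0 = ⨆ n, ℱ n)
    (ω₁ ω₂ v : Ω → ℝ)
    (hω₁ : ∀ x, 0 < ω₁ x) (hω₂ : ∀ x, 0 < ω₂ x)
    (hω₁I : Integrable ω₁ μ) (hω₂I : Integrable ω₂ μ)
    (p p₁ p₂ : ℝ) (hp₁ : 1 < p₁) (hp₂ : 1 < p₂)
    (hp : 1 / p = 1 / p₁ + 1 / p₂)
    (hσ₁I : Integrable (fun x => ω₁ x ^ (-(1 / (p₁ - 1)))) μ)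
    (hσ₂I : Integrable (fun x => ω₂ x ^ (-(1 / (p₂ - 1)))) μ)
    (hvdef : v = fun x => ω₁ x ^ (p / p₁) * ω₂ x ^ (p / p₂))
    (f g : Ω → ℝ)
    (hfI : Integrable f μ) (hfL : Integrable (fun x => |f x| ^ p₁ * ω₁ x) μ)
    (hgI : Integrable g μ) (hgL : Integrable (fun x => |g x| ^ p₂ * ω₂ x) μ)
    (hfg : ∀ n : ℕ, Integrable (fun x => |(μ[f|ℱ n]) x * (μ[g|ℱ n]) x| ^ p * v x) μ)
    (H : ∀ ε : ℝ, 0 < ε → ∃ y : Ω → ℝ, (∀ x, 0 ≤ y x) ∧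
      Integrable (fun x => y x ^ p * v x) μ ∧
      ∀ n : ℕ,
        (∫ x in {x | y x ≤ |(μ[f|ℱ n]) x * (μ[g|ℱ n]) x|},
            |(μ[f|ℱ n]) x * (μ[g|ℱ n]) x| ^ p * v x ∂μ) ^ (1 / p) ≤ ε) :
    Tendsto (fun n : ℕ => ∫ x, |(μ[f|ℱ n]) x * (μ[g|ℱ n]) x - f x * g x| ^ p * v x ∂μ)
      atTop (nhds 0) :=
  stmt_11_general ℱ hgen ω₁ ω₂ v hω₁ hω₂ hω₁I hω₂I p p₁ p₂ hp₁ hp₂ hp hvdef f g hfI hgI hfg H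
end
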